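/- arXiv:2308.15441 — 8 statements merged into one kernel-verified Lean document; each statement's English description precedes it below -/
import Mathlib

section
/- Let q = p^ℓ be a prime power with p prime, let n ≥ 2, and let F be a family of functions F_q^n → F_q that is linear, affine-invariant, and monomially closed. Suppose the monomial function x^e lies in F, where e ∈ {0,…,q−1}^n, and let m be a natural number with m ≤_p e₂. Then the function α ↦ α₁^{e₁+m}·α₂^{e₂−m}·∏_{j=3}^n α_j^{e_j} also lies in F. -/
/-- `a ≤_p b`: every base-`p` digit of `a` is at most the corresponding base-`p` digit of `b`. -/
def digitLE (p a b : ℕ) : Prop := ∀ i : ℕ, a / p ^ i % p ≤ b / p ^ i % p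

/-- The monomial function `x^e : F^n → F`, `α ↦ ∏ i, α i ^ e i` (with `0^0 = 1`). -/
def monFn {F : Type} [Field F] {n : ℕ} (e : Fin n → ℕ) : (Fin n → F) → F :=
  fun α => ∏ i, α i ^ e i

/-- `T : F^n → F^k` is an affine map if `T x = M x + b` for a matrix `M` and vector `b`. -/
def IsAffineMap {F : Type} [Field F] {n k : ℕ} (T : (Fin n → F) → (Fin k → F)) : Prop :=
  ∃ (M : Matrix (Fin k) (Fin n) F) (b : Fin k → F), ∀ x, T x = M.mulVec x + b

/-- A family of functions is linear if it contains `0` and is closed under `F`-linear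
combinations. -/
def LinearFamily {F : Type} [Field F] {n : ℕ} (𝓕 : Set ((Fin n → F) → F)) : Prop :=
  (fun _ => (0 : F)) ∈ 𝓕 ∧
    ∀ (a b : F) (f g : (Fin n → F) → F), f ∈ 𝓕 → g ∈ 𝓕 →
      (fun x => a * f x + b * g x) ∈ 𝓕

/-- A family of functions is affine-invariant if it is closed under composition with
affine maps `F^n → F^n`. -/
def AffineInvariant {F : Type} [Field F] {n : ℕ} (𝓕 : Set ((Fin n → F) → F)) : Prop :=
  ∀ f ∈ 𝓕, ∀ T : (Fin n → F) → (Fin n → F), IsAffineMap T → (f ∘ T) ∈ 𝓕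

/-- `P` is the reduced polynomial of `f`: all individual degrees are at most `q - 1`
and `P` computes `f`.  The parameter `q` is the field size. -/
def IsReducedPolyOf (q : ℕ) {F : Type} [Field F] {n : ℕ} (P : MvPolynomial (Fin n) F)
    (f : (Fin n → F) → F) : Prop :=
  (∀ i, P.degreeOf i ≤ q - 1) ∧ ∀ x, MvPolynomial.eval x P = f x

/-- A family is monomially closed if every monomial appearing in (the reduced polynomial of)
a member lies in the family as a monomial function. -/
def MonomiallyClosed (q : ℕ) {F : Type} [Field F] {n : ℕ} (𝓕 : Set ((Fin n → F) → F)) : Prop :=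
  ∀ f ∈ 𝓕, ∀ P : MvPolynomial (Fin n) F, IsReducedPolyOf q P f →
    ∀ e : Fin n →₀ ℕ, P.coeff e ≠ 0 → monFn (fun i => e i) ∈ 𝓕

/- ### auxiliary lemmas -/

theorem aux_digitLE_le (p m b : ℕ) (hp : 2 ≤ p) (h : ∀ i : ℕ, m / p ^ i % p ≤ b / p ^ i % p) :
    m ≤ b := by
  induction m using Nat.strong_induction_on generalizing b with
  | _ m ih =>
    rcases Nat.eq_zero_or_pos m with rfl | hm
    · exact Nat.zero_le _
    have h0 : m % p ≤ b % p := by simpa using h 0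
    have hdiv : ∀ i, (m / p) / p ^ i % p ≤ (b / p) / p ^ i % p := by
      intro i; have := h (i+1); simpa [Nat.div_div_eq_div_mul, pow_succ, mul_comm] using this
    have hd : m / p ≤ b / p := ih (m / p) (Nat.div_lt_self hm (by omega)) _ hdiv
    have e1 := Nat.div_add_mod m p
    have e2 := Nat.div_add_mod b p
    nlinarith [hd, h0, e1, e2]

theorem aux_small_case (p a k : ℕ) (hp : p.Prime) (ha : a < p) (hk : k ≤ a) :
    ¬ p ∣ Nat.choose a k := by
  intro hdvd
  have h1 : Nat.choose a k * (k.factorial * (a - k).factorial) = a.factorial := by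
    rw [← Nat.choose_mul_factorial_mul_factorial hk]; ring
  have : p ∣ a.factorial := h1 ▸ hdvd.mul_right _
  exact absurd ((Nat.Prime.dvd_factorial hp).mp this) (by omega)

theorem aux_lucas_nondvd (p m b : ℕ) (hp : p.Prime)
    (h : ∀ i : ℕ, m / p ^ i % p ≤ b / p ^ i % p) : ¬ p ∣ Nat.choose b m := by
  haveI : Fact p.Prime := ⟨hp⟩
  induction m using Nat.strong_induction_on generalizing b with
  | _ m ih =>
    have key : Nat.choose b m ≡ Nat.choose (b % p) (m % p) * Nat.choose (b / p) (m / p) [MOD p] :=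
      Choose.choose_modEq_choose_mod_mul_choose_div_nat
    intro hdvd
    have h2 : p ∣ Nat.choose (b % p) (m % p) * Nat.choose (b / p) (m / p) :=
      (Nat.modEq_zero_iff_dvd.mp (key.symm.trans (Nat.modEq_zero_iff_dvd.mpr hdvd)))
    have h0 : m % p ≤ b % p := by simpa using h 0
    rcases hp.dvd_mul.mp h2 with hc | hc
    · exact aux_small_case p (b % p) (m % p) hp (Nat.mod_lt _ hp.pos) h0 hc
    · rcases Nat.eq_zero_or_pos m with rfl | hm
      · simp [Nat.dvd_one] at hc
        exact hp.one_lt.ne' hc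
      · exact ih (m / p) (Nat.div_lt_self hm hp.one_lt) (b / p)
          (fun i => by
            have := h (i+1)
            simpa [Nat.div_div_eq_div_mul, pow_succ, mul_comm] using this) hc

theorem aux_charP (p ℓ : ℕ) (hp : p.Prime) (F : Type) [Field F] [Fintype F] (hℓ : 1 ≤ ℓ)
    (hcard : Fintype.card F = p ^ ℓ) : CharP F p := by
  obtain ⟨n, hrp, hc⟩ := FiniteField.card F (ringChar F)
  have : ringChar F = p := by
    have : ringChar F ∣ p ^ ℓ := hcard ▸ hc ▸ dvd_pow_self _ (by positivity)
    exact (Nat.prime_dvd_prime_iff_eq hrp hp).mp (hrp.dvd_of_dvd_pow this)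
  exact this ▸ ringChar.charP F

/-- reduction of an exponent -/
theorem aux_pow_red (q : ℕ) (F : Type) [Field F] [Fintype F] (hcard : Fintype.card F = q)
    (k : ℕ) (α : F) : α ^ (if k ≤ q - 1 then k else k - (q - 1)) = α ^ k := by
  split_ifs with h
  · rfl
  · have hq2 : 2 ≤ q := hcard ▸ Fintype.one_lt_card
    have hk : q ≤ k := by omega
    have hpc : α ^ q = α := by rw [← hcard]; exact FiniteField.pow_card α
    symm
    calc α ^ k = α ^ ((k - q) + q) := by congr 1; omega
      _ = α ^ (k - q) * α ^ q := pow_add α _ _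
      _ = α ^ (k - q) * α := by rw [hpc]
      _ = α ^ (k - q + 1) := (pow_succ α _).symm
      _ = α ^ (k - (q - 1)) := by congr 1; omega

/-- **Monomial shift lemma.**
If `𝓕` is linear, affine-invariant and monomially closed, `x^e ∈ 𝓕` with
`e ∈ {0,…,q-1}^n`, and `m ≤_p e₂`, then the function
`α ↦ α₁^{e₁+m} · α₂^{e₂-m} · ∏_{j≥3} α_j^{e_j}` is also in `𝓕`. -/
theorem monomial_shift (p ℓ q : ℕ) (hp : p.Prime) (hℓ : 1 ≤ ℓ) (hq : q = p ^ ℓ)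
    (F : Type) [Field F] [Fintype F] (hcard : Fintype.card F = q)
    (n : ℕ) (hn : 2 ≤ n) (𝓕 : Set ((Fin n → F) → F))
    (hlin : LinearFamily 𝓕) (haff : AffineInvariant 𝓕) (hmon : MonomiallyClosed q 𝓕)
    (e : Fin n → ℕ) (he : ∀ i, e i ≤ q - 1) (hmem : monFn e ∈ 𝓕)
    (m : ℕ) (hdig : digitLE p m (e ⟨1, by omega⟩)) :
    monFn (Function.update (Function.update e ⟨0, by omega⟩ (e ⟨0, by omega⟩ + m))
      ⟨1, by omega⟩ (e ⟨1, by omega⟩ - m)) ∈ 𝓕 := by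
  haveI : CharP F p := aux_charP p ℓ hp F hℓ (hq ▸ hcard)
  set i0 : Fin n := ⟨0, by omega⟩ with hi0
  set i1 : Fin n := ⟨1, by omega⟩ with hi1
  have hne : i0 ≠ i1 := by simp [hi0, hi1, Fin.ext_iff]
  set a := e i0 with ha
  set b := e i1 with hb
  have hq2 : 2 ≤ q := hcard ▸ Fintype.one_lt_card
  have hmb : m ≤ b := aux_digitLE_le p m b hp.two_le hdig
  have haq : a ≤ q - 1 := he i0
  have hbq : b ≤ q - 1 := he i1
  -- the affine map
  set T : (Fin n → F) → (Fin n → F) := fun x j => if j = i1 then x i0 + x i1 else x j with hT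
  have hTaff : IsAffineMap T := by
    refine ⟨Matrix.of fun j k =>
      if j = i1 then (if k = i0 then 1 else if k = i1 then 1 else 0)
      else (if k = j then 1 else 0), 0, ?_⟩
    intro x
    funext j
    simp only [Pi.add_apply, Pi.zero_apply, add_zero, Matrix.mulVec, dotProduct,
      Matrix.of_apply, hT]
    split_ifs with hj
    · have : ∀ k : Fin n, (if k = i0 then (1:F) else if k = i1 then 1 else 0) * x k
          = (if k = i0 then x i0 else 0) + (if k = i1 then x i1 else 0) := by
        intro k
        split_ifs with h1 h2 <;> simp_all
      rw [Finset.sum_congr rfl (fun k _ => this k), Finset.sum_add_distrib]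
      simp
    · have : ∀ k : Fin n, (if k = j then (1:F) else 0) * x k
          = if k = j then x j else 0 := by
        intro k; split_ifs with h1 <;> simp_all
      rw [Finset.sum_congr rfl (fun k _ => this k)]
      simp
  have hg : (monFn e ∘ T) ∈ 𝓕 := haff _ hmem T hTaff
  -- exponent vectors
  set red : ℕ → ℕ := fun k => if k ≤ q - 1 then k else k - (q - 1) with hred
  set vec : ℕ → (Fin n → ℕ) := fun m' j =>
    if j = i0 then red (a + m') else if j = i1 then b - m' else e j with hvec
  have v0 : ∀ m', vec m' i0 = red (a + m') := fun m' => by simp [hvec]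
  have v1 : ∀ m', vec m' i1 = b - m' := fun m' => by simp [hvec, Ne.symm hne]
  have vS : ∀ m' j, j ≠ i0 → j ≠ i1 → vec m' j = e j := by
    intro m' j h1 h2; simp [hvec, h1, h2]
  set P : MvPolynomial (Fin n) F :=
    ∑ m' ∈ Finset.range (b + 1),
      MvPolynomial.monomial (Finsupp.equivFunOnFinite.symm (vec m')) ((Nat.choose b m' : F))
    with hP
  -- reduced polynomial conditions
  have hdeg : ∀ i, P.degreeOf i ≤ q - 1 := by
    intro i
    refine le_trans (MvPolynomial.degreeOf_sum_le _ _ _) (Finset.sup_le fun m' hm' => ?_)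
    refine le_trans ?_ (le_refl (q-1))
    rw [MvPolynomial.degreeOf_le_iff]
    intro d hd
    have := MvPolynomial.support_monomial_subset hd
    simp only [Finset.mem_singleton] at this
    subst this
    simp only [Finsupp.coe_equivFunOnFinite_symm]
    have hm'b : m' ≤ b := by simpa [Nat.lt_succ_iff] using hm'
    rcases eq_or_ne i i0 with rfl | h1
    · rw [v0]
      simp only [hred]; split_ifs with h2
      · exact h2
      · omega
    rcases eq_or_ne i i1 with rfl | h2
    · rw [v1]; omega
    · rw [vS m' i h1 h2]; exact he i
  have hR : ∀ x : Fin n → F, MvPolynomial.eval x P = (monFn e ∘ T) x := by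
    intro x
    set S : Finset (Fin n) := (Finset.univ.erase i0).erase i1 with hS
    have hi1S : i1 ∈ Finset.univ.erase i0 := Finset.mem_erase.mpr ⟨Ne.symm hne, Finset.mem_univ _⟩
    have hprod : ∀ v : Fin n → F, ∏ j, v j = v i0 * (v i1 * ∏ j ∈ S, v j) := by
      intro v
      rw [← Finset.mul_prod_erase Finset.univ v (Finset.mem_univ i0),
        ← Finset.mul_prod_erase _ v hi1S]
    have hSne : ∀ j ∈ S, j ≠ i0 ∧ j ≠ i1 := by
      intro j hj
      simp only [hS, Finset.mem_erase] at hj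
      exact ⟨hj.2.1, hj.1⟩
    -- LHS
    have lhs : MvPolynomial.eval x P
        = ∑ m' ∈ Finset.range (b + 1),
          (Nat.choose b m' : F) * (x i0 ^ (a + m') * (x i1 ^ (b - m') * ∏ j ∈ S, x j ^ e j)) := by
      rw [hP, map_sum]
      refine Finset.sum_congr rfl fun m' _ => ?_
      rw [MvPolynomial.eval_monomial]
      congr 1
      rw [Finsupp.prod_fintype _ _ (fun j => pow_zero _)]
      have : ∀ j, x j ^ ((Finsupp.equivFunOnFinite.symm (vec m')) j) = x j ^ vec m' j := by
        intro j; simp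
      rw [Finset.prod_congr rfl (fun j _ => this j), hprod (fun j => x j ^ vec m' j)]
      rw [v0, v1]
      congr 1
      · simp only [hred]
        exact aux_pow_red q F hcard (a + m') (x i0)
      congr 1
      refine Finset.prod_congr rfl fun j hj => ?_
      obtain ⟨h1, h2⟩ := hSne j hj
      rw [vS m' j h1 h2]
    -- RHS
    have rhs : (monFn e ∘ T) x
        = x i0 ^ a * ((x i0 + x i1) ^ b * ∏ j ∈ S, x j ^ e j) := by
      have t0 : T x i0 = x i0 := if_neg hne
      have t1 : T x i1 = x i0 + x i1 := if_pos rfl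
      have tS : ∀ j, j ≠ i1 → T x j = x j := fun j hj => if_neg hj
      simp only [Function.comp_apply, monFn]
      rw [hprod (fun j => T x j ^ e j), t0, t1]
      congr 1
      congr 1
      exact Finset.prod_congr rfl fun j hj => by rw [tS j (hSne j hj).2]
    rw [lhs, rhs, add_pow, Finset.sum_mul, Finset.mul_sum]
    refine Finset.sum_congr rfl fun m' _ => ?_
    rw [pow_add]
    ring
  -- the coefficient of the target monomial
  have hinj : ∀ m₁ ∈ Finset.range (b+1), ∀ m₂ ∈ Finset.range (b+1),
      Finsupp.equivFunOnFinite.symm (vec m₁) = Finsupp.equivFunOnFinite.symm (vec m₂) → m₁ = m₂ := by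
    intro m₁ h₁ m₂ h₂ hv
    have := congrArg (fun f => (f : Fin n →₀ ℕ) i1) hv
    simp only [Finsupp.coe_equivFunOnFinite_symm] at this
    rw [v1, v1] at this
    simp only [Finset.mem_range, Nat.lt_succ_iff] at h₁ h₂
    omega
  have hcoeff : P.coeff (Finsupp.equivFunOnFinite.symm (vec m)) = (Nat.choose b m : F) := by
    rw [hP, MvPolynomial.coeff_sum]
    rw [Finset.sum_eq_single m]
    · simp
    · intro m' hm' hne'
      rw [MvPolynomial.coeff_monomial, if_neg]
      intro hcontra
      exact hne' (hinj m' hm' m (by simp [Nat.lt_succ_iff, hmb]) hcontra)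
    · intro hcontra
      exact absurd (Finset.mem_range.mpr (by omega)) hcontra
  have hcne : P.coeff (Finsupp.equivFunOnFinite.symm (vec m)) ≠ 0 := by
    intro h0
    rw [hcoeff] at h0
    exact aux_lucas_nondvd p m b hp hdig ((CharP.cast_eq_zero_iff F p _).mp h0)
  have hmem2 : monFn (fun i => (Finsupp.equivFunOnFinite.symm (vec m)) i) ∈ 𝓕 :=
    hmon _ hg P ⟨hdeg, hR⟩ _ hcne
  -- identify the two functions
  have hfun : (monFn (fun i => (Finsupp.equivFunOnFinite.symm (vec m)) i) : (Fin n → F) → F)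
      = monFn (Function.update (Function.update e i0 (a + m)) i1 (b - m)) := by
    funext α
    simp only [monFn]
    refine Finset.prod_congr rfl fun j _ => ?_
    simp only [Finsupp.coe_equivFunOnFinite_symm]
    rcases eq_or_ne j i0 with rfl | hj0
    · rw [v0, Function.update_of_ne hne, Function.update_self]
      simp only [hred]
      exact aux_pow_red q F hcard (a + m) (α i0)
    rcases eq_or_ne j i1 with rfl | hj1
    · rw [v1, Function.update_self]
    · rw [vS m j hj0 hj1, Function.update_of_ne hj1, Function.update_of_ne hj0]
  rw [← hfun]
  exact hmem2
end

section
/- Let q be a prime power and let F be a family of functions F_q^n → F_q that is linear and affine-invariant. Then for every f ∈ F and every monomial x^e appearing in the reduced polynomial of f, the monomial function x^e lies in F; consequently F equals the F_q-linear span of the set of monomial functions it contains. -/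
open Finset MvPolynomial

private lemma family_smul {F : Type} [Field F] {n : ℕ} {𝓕 : Set ((Fin n → F) → F)}
    (hlin : LinearFamily 𝓕) (a : F) {f : (Fin n → F) → F} (hf : f ∈ 𝓕) :
    (fun x => a * f x) ∈ 𝓕 := by
  simpa using hlin.2 a 0 f (fun _ => 0) hf hlin.1

private lemma family_sum {F : Type} [Field F] {n : ℕ} {𝓕 : Set ((Fin n → F) → F)}
    (hlin : LinearFamily 𝓕) {ι : Type} (s : Finset ι) (g : ι → (Fin n → F) → F)
    (hg : ∀ j ∈ s, g j ∈ 𝓕) : (fun x => ∑ j ∈ s, g j x) ∈ 𝓕 := by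
  classical
  induction s using Finset.induction_on with
  | empty => simpa using hlin.1
  | @insert a s ha ih =>
      simp only [Finset.sum_insert ha]
      simpa using hlin.2 1 1 (g a) (fun x => ∑ j ∈ s, g j x)
        (hg a (Finset.mem_insert_self a s)) (ih fun j hj => hg j (Finset.mem_insert_of_mem hj))

private lemma sum_pow_field {F : Type} [Field F] [Fintype F] (r : ℕ)
    (hr : r < 2 * (Fintype.card F - 1)) :
    ∑ c : F, c ^ r = if r = Fintype.card F - 1 then -1 else 0 := by
  classical
  rcases Nat.eq_zero_or_pos r with rfl | hr0
  · rw [if_neg (by omega)]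
    simp [Finset.card_univ, FiniteField.cast_card_eq_zero]
  · have hiff : (Fintype.card F - 1 ∣ r) ↔ r = Fintype.card F - 1 := by
      constructor
      · intro hdvd
        have h1 := Nat.le_of_dvd hr0 hdvd
        have h2 : (Fintype.card F - 1) ∣ (r - (Fintype.card F - 1)) :=
          Nat.dvd_sub hdvd dvd_rfl
        have h3 := Nat.eq_zero_of_dvd_of_lt h2 (by omega)
        omega
      · rintro rfl; exact dvd_rfl
    let φ : Fˣ ↪ F := ⟨fun x => x, fun _ _ h => Units.ext h⟩
    have huniv : Finset.univ.map φ = Finset.univ \ {(0:F)} := by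
      ext x
      simp only [Finset.mem_map, Finset.mem_univ, Function.Embedding.coeFn_mk, true_and,
        Finset.mem_sdiff, Finset.mem_singleton, φ]
      exact isUnit_iff_ne_zero
    calc ∑ x : F, x ^ r = ∑ x ∈ Finset.univ \ {(0:F)}, x ^ r := by
          rw [← Finset.sum_sdiff (({0} : Finset F).subset_univ), Finset.sum_singleton,
            zero_pow hr0.ne', add_zero]
      _ = ∑ x : Fˣ, (x : F) ^ r := by rw [← huniv, Finset.sum_map]; rfl
      _ = _ := by rw [FiniteField.sum_pow_units F r]; simp only [hiff]

private lemma exists_weights {F : Type} [Field F] [Fintype F] (d : ℕ)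
    (hd : d ≤ Fintype.card F - 1) :
    ∃ w : F → F, ∀ t ≤ Fintype.card F - 1, ∑ c : F, w c * c ^ t = if t = d then 1 else 0 := by
  classical
  rcases Nat.eq_zero_or_pos d with rfl | hd0
  · refine ⟨fun c => if c = 0 then 1 else 0, fun t ht => ?_⟩
    rw [Finset.sum_eq_single (0 : F) (fun b _ hb => by simp [hb]) (by simp)]
    simp [zero_pow_eq]
  · have hcard2 : 1 ≤ Fintype.card F - 1 := le_trans hd0 hd
    refine ⟨fun c => -(c ^ (Fintype.card F - 1 - d)), fun t ht => ?_⟩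
    have hc : ∀ c : F, -(c ^ (Fintype.card F - 1 - d)) * c ^ t
        = -(c ^ (Fintype.card F - 1 - d + t)) := by
      intro c; rw [pow_add]; ring
    simp_rw [hc]
    rw [Finset.sum_neg_distrib, sum_pow_field _ (by omega)]
    by_cases h : t = d
    · subst h; rw [if_pos (by omega), if_pos rfl]; norm_num
    · rw [if_neg (by omega), if_neg h]; norm_num
private lemma sliceStep {F : Type} [Field F] [Fintype F] {n : ℕ}
    {𝓕 : Set ((Fin n → F) → F)} (hlin : LinearFamily 𝓕) (haff : AffineInvariant 𝓕)
    {g : (Fin n → F) → F} (hg : g ∈ 𝓕) {Q : MvPolynomial (Fin n) F}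
    (hdeg : ∀ m ∈ Q.support, ∀ j, (m : Fin n →₀ ℕ) j ≤ Fintype.card F - 1)
    (heval : ∀ x, MvPolynomial.eval x Q = g x)
    (i : Fin n) {d : ℕ} (hd : d ≤ Fintype.card F - 1) :
    ∃ g' ∈ 𝓕, ∃ Q' : MvPolynomial (Fin n) F,
      (∀ m : Fin n →₀ ℕ, Q'.coeff m = if m i = d then Q.coeff m else 0) ∧
      (∀ x, MvPolynomial.eval x Q' = g' x) := by
  classical
  obtain ⟨w, hw⟩ := exists_weights d hd
  set T : F → (Fin n → F) → (Fin n → F) := fun c x j => (if j = i then c else 1) * x j with hT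
  have hTaff : ∀ c, IsAffineMap (T c) := by
    intro c
    refine ⟨Matrix.diagonal (fun j => if j = i then c else 1), 0, fun x => ?_⟩
    funext j
    simp [Matrix.mulVec_diagonal, T]
  set g' : (Fin n → F) → F := fun x => ∑ c : F, w c * g (T c x) with hg'def
  have hg'mem : g' ∈ 𝓕 := by
    refine family_sum hlin Finset.univ (fun c => fun x => w c * g (T c x)) fun c _ => ?_
    exact family_smul hlin (w c) (haff g hg (T c) (hTaff c))
  set Q' : MvPolynomial (Fin n) F :=
    ∑ m ∈ Q.support.filter (fun m => m i = d), MvPolynomial.monomial m (Q.coeff m) with hQ'def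
  refine ⟨g', hg'mem, Q', ?_, ?_⟩
  · intro m
    rw [hQ'def, MvPolynomial.coeff_sum]
    simp_rw [MvPolynomial.coeff_monomial]
    rw [Finset.sum_ite_eq' (Q.support.filter (fun m => m i = d)) m (fun m' => Q.coeff m')]
    by_cases h : m i = d
    · by_cases hs : m ∈ Q.support
      · rw [if_pos (Finset.mem_filter.mpr ⟨hs, h⟩), if_pos h]
      · rw [if_neg (show m ∉ Q.support.filter (fun m => m i = d) from fun hmem => hs (Finset.mem_filter.mp hmem).1), if_pos h,
          MvPolynomial.notMem_support_iff.mp hs]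
    · rw [if_neg (show m ∉ Q.support.filter (fun m => m i = d) from fun hmem => h (Finset.mem_filter.mp hmem).2), if_neg h]
  · intro x
    have hgT : ∀ c, g (T c x) = ∑ m ∈ Q.support, Q.coeff m * (c ^ (m i) * ∏ j, x j ^ m j) := by
      intro c
      rw [← heval (T c x), MvPolynomial.eval_eq']
      refine Finset.sum_congr rfl fun m _ => ?_
      congr 1
      calc ∏ j, (T c x j) ^ m j
          = ∏ j, ((if j = i then c else 1) ^ m j * x j ^ m j) := by
            refine Finset.prod_congr rfl fun j _ => ?_
            rw [hT, mul_pow]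
        _ = (∏ j, (if j = i then c else 1) ^ m j) * ∏ j, x j ^ m j :=
            Finset.prod_mul_distrib
        _ = c ^ m i * ∏ j, x j ^ m j := by
            congr 1
            rw [Finset.prod_eq_single i (fun b _ hb => by simp [hb]) (by simp)]
            simp
    calc MvPolynomial.eval x Q'
        = ∑ m ∈ Q.support.filter (fun m => m i = d), Q.coeff m * ∏ j, x j ^ m j := by
          rw [hQ'def, map_sum]
          refine Finset.sum_congr rfl fun m _ => ?_
          rw [MvPolynomial.eval_monomial]
          congr 1
          exact Finsupp.prod_fintype _ _ fun j => pow_zero _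
      _ = ∑ m ∈ Q.support, (if m i = d then 1 else 0) * (Q.coeff m * ∏ j, x j ^ m j) := by
          rw [Finset.sum_filter]
          refine Finset.sum_congr rfl fun m _ => ?_
          split_ifs <;> ring
      _ = ∑ m ∈ Q.support, (∑ c : F, w c * c ^ m i) * (Q.coeff m * ∏ j, x j ^ m j) := by
          refine Finset.sum_congr rfl fun m hm => ?_
          rw [hw (m i) (hdeg m hm i)]
      _ = g' x := by
          rw [hg'def]
          simp_rw [hgT, Finset.mul_sum, Finset.sum_mul]
          rw [Finset.sum_comm]
          exact Finset.sum_congr rfl fun m _ => Finset.sum_congr rfl fun c _ => by ring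
private lemma extract_mon {F : Type} [Field F] [Fintype F] {n : ℕ}
    {𝓕 : Set ((Fin n → F) → F)} (hlin : LinearFamily 𝓕) (haff : AffineInvariant 𝓕)
    {f : (Fin n → F) → F} (hf : f ∈ 𝓕) {P : MvPolynomial (Fin n) F}
    (hdeg : ∀ m ∈ P.support, ∀ j, (m : Fin n →₀ ℕ) j ≤ Fintype.card F - 1)
    (heval : ∀ x, MvPolynomial.eval x P = f x)
    (e : Fin n →₀ ℕ) (he : ∀ j, e j ≤ Fintype.card F - 1) (hce : P.coeff e ≠ 0) :
    monFn (fun i => (e i : ℕ)) ∈ 𝓕 := by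
  classical
  have main : ∀ s : Finset (Fin n), ∃ g ∈ 𝓕, ∃ Q : MvPolynomial (Fin n) F,
      (∀ m : Fin n →₀ ℕ, Q.coeff m = if ∀ j ∈ s, m j = e j then P.coeff m else 0) ∧
      (∀ x, MvPolynomial.eval x Q = g x) := by
    intro s
    induction s using Finset.induction_on with
    | empty => exact ⟨f, hf, P, fun m => by simp, heval⟩
    | @insert i s hi ih =>
        obtain ⟨g, hg, Q, hQc, hQe⟩ := ih
        have hQdeg : ∀ m ∈ Q.support, ∀ j, (m : Fin n →₀ ℕ) j ≤ Fintype.card F - 1 := by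
          intro m hm j
          have hne := MvPolynomial.mem_support_iff.mp hm
          rw [hQc m] at hne
          by_cases h : ∀ j' ∈ s, m j' = e j'
          · rw [if_pos h] at hne
            exact hdeg m (MvPolynomial.mem_support_iff.mpr hne) j
          · rw [if_neg h] at hne; exact absurd rfl hne
        obtain ⟨g', hg', Q', hQ'c, hQ'e⟩ := sliceStep hlin haff hg hQdeg hQe i (he i)
        refine ⟨g', hg', Q', fun m => ?_, hQ'e⟩
        rw [hQ'c m, hQc m]
        simp only [Finset.forall_mem_insert]
        split_ifs <;> tauto
  obtain ⟨g, hg, Q, hQc, hQe⟩ := main Finset.univ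
  have hQ : Q = MvPolynomial.monomial e (P.coeff e) := by
    ext m
    rw [hQc m, MvPolynomial.coeff_monomial]
    by_cases h : m = e
    · subst h; rw [if_pos (fun j _ => rfl), if_pos rfl]
    · rw [if_neg (fun hall => h (Finsupp.ext fun j => hall j (Finset.mem_univ j))),
        if_neg (fun he' => h he'.symm)]
  have hgx : ∀ x, g x = P.coeff e * ∏ j, x j ^ e j := by
    intro x
    rw [← hQe x, hQ, MvPolynomial.eval_monomial]
    congr 1
    exact Finsupp.prod_fintype _ _ fun j => pow_zero _
  have hmem : (fun x => (P.coeff e)⁻¹ * g x) ∈ 𝓕 := family_smul hlin _ hg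
  have heq : monFn (fun i => (e i : ℕ)) = fun x => (P.coeff e)⁻¹ * g x := by
    funext x
    show ∏ j, x j ^ e j = (P.coeff e)⁻¹ * g x
    rw [hgx x, inv_mul_cancel_left₀ hce]
  rw [heq]
  exact hmem


/-- **Monomial extraction lemma (Kaufman–Sudan).**
A linear, affine-invariant family `𝓕` of functions `F_q^n → F_q` contains, as a monomial
function, every monomial appearing in the reduced polynomial of any of its members;
consequently `𝓕` equals the `F_q`-linear span of the monomial functions it contains. -/
theorem monomial_extraction (q : ℕ) (hq : IsPrimePow q)
    (F : Type) [Field F] [Fintype F] (hcard : Fintype.card F = q)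
    (n : ℕ) (𝓕 : Set ((Fin n → F) → F))
    (hlin : LinearFamily 𝓕) (haff : AffineInvariant 𝓕) :
    MonomiallyClosed q 𝓕 ∧
      𝓕 = (Submodule.span F
        {g : (Fin n → F) → F | g ∈ 𝓕 ∧
          ∃ e : Fin n → ℕ, (∀ i, e i ≤ q - 1) ∧ g = monFn e} : Set ((Fin n → F) → F)) := by
  classical
  subst hcard
  have part1 : MonomiallyClosed (Fintype.card F) 𝓕 := by
    intro f hf P hP e hce
    have hdeg : ∀ m ∈ P.support, ∀ j, (m : Fin n →₀ ℕ) j ≤ Fintype.card F - 1 :=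
      fun m hm j => MvPolynomial.degreeOf_le_iff.mp (hP.1 j) m hm
    exact extract_mon hlin haff hf hdeg hP.2 e
      (fun j => hdeg e (MvPolynomial.mem_support_iff.mpr hce) j) hce
  refine ⟨part1, ?_⟩
  -- the submodule structure on 𝓕
  let S : Submodule F ((Fin n → F) → F) :=
    { carrier := 𝓕
      add_mem' := fun {f g} hf hg => by
        have h : (fun x => f x + g x) ∈ 𝓕 := by simpa using hlin.2 1 1 f g hf hg
        exact h
      zero_mem' := hlin.1
      smul_mem' := fun a f hf => by
        have h : (fun x => a * f x) ∈ 𝓕 := family_smul hlin a hf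
        exact h }
  apply Set.Subset.antisymm
  · -- 𝓕 ⊆ span
    intro f hf
    obtain ⟨P, hPmem, hPf⟩ := Submodule.mem_map.mp
      ((MvPolynomial.map_restrict_dom_evalₗ F (Fin n)) ▸ Submodule.mem_top :
        f ∈ (MvPolynomial.restrictDegree (Fin n) F (Fintype.card F - 1)).map
          (MvPolynomial.evalₗ F (Fin n)))
    have hPdeg : ∀ m ∈ P.support, ∀ j, (m : Fin n →₀ ℕ) j ≤ Fintype.card F - 1 :=
      (MvPolynomial.mem_restrictDegree (p := P) (n := Fintype.card F - 1)).mp hPmem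
    have heval : ∀ x, MvPolynomial.eval x P = f x := fun x => by
      rw [← hPf]; rfl
    have hred : IsReducedPolyOf (Fintype.card F) P f :=
      ⟨fun j => MvPolynomial.degreeOf_le_iff.mpr fun m hm => hPdeg m hm j, heval⟩
    have hfsum : f = ∑ m ∈ P.support, (P.coeff m) • monFn (fun i => (m i : ℕ)) := by
      funext x
      rw [← heval x, MvPolynomial.eval_eq', Finset.sum_apply]
      refine Finset.sum_congr rfl fun m _ => ?_
      rw [Pi.smul_apply, smul_eq_mul]
      rfl
    rw [hfsum]
    refine Submodule.sum_mem _ fun m hm => Submodule.smul_mem _ _ (Submodule.subset_span ?_)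
    refine ⟨part1 f hf P hred m (MvPolynomial.mem_support_iff.mp hm),
      fun i => m i, fun i => hPdeg m hm i, rfl⟩
  · -- span ⊆ 𝓕
    intro f hf
    exact Submodule.span_le.mpr (fun g hg => (hg.1 : g ∈ S)) hf
end

section
/- Let q = p^ℓ be a prime power with p prime, and let F be a family of functions F_q^n → F_q that is linear, affine-invariant, and monomially closed. Let e, e' ∈ {0,…,q−1}^n with e ≤_p e' coordinatewise. If the monomial function x^{e'} lies in F, then the monomial function x^e lies in F. -/
set_option maxHeartbeats 1000000 in
lemma degreeOf_monomial_le' {σ R : Type*} [CommSemiring R] (d : σ →₀ ℕ) (a : R) (i : σ) :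
    (MvPolynomial.monomial d a).degreeOf i ≤ d i := by
  rcases eq_or_ne a 0 with rfl | h
  · simp
  · classical
    rw [MvPolynomial.degreeOf_monomial_eq d i h]


lemma digitLE_le (p : ℕ) (hp : 2 ≤ p) : ∀ a b, digitLE p a b → a ≤ b := by
  intro a
  induction a using Nat.strong_induction_on with
  | _ a ih =>
    intro b h
    rcases Nat.eq_zero_or_pos a with rfl | ha
    · exact Nat.zero_le b
    have h0 : a % p ≤ b % p := by simpa using h 0
    have hdiv : digitLE p (a / p) (b / p) := by
      intro i
      have := h (i + 1)
      simpa [Nat.div_div_eq_div_mul, pow_succ, mul_comm] using this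
    have h1 := ih (a / p) (Nat.div_lt_self ha (by omega)) (b / p) hdiv
    have ea := Nat.div_add_mod a p
    have eb := Nat.div_add_mod b p
    have : p * (a / p) ≤ p * (b / p) := Nat.mul_le_mul_left p h1
    omega

lemma not_dvd_choose_of_digitLE (p a b : ℕ) (hp : p.Prime) (h : digitLE p a b) :
    ¬ p ∣ Nat.choose b a := by
  haveI : Fact p.Prime := ⟨hp⟩
  have hab : a ≤ b := digitLE_le p hp.two_le a b h
  have hm : b < p ^ (b + 1) :=
    lt_of_lt_of_le (Nat.lt_pow_self hp.one_lt : b < p ^ b) (Nat.pow_le_pow_right hp.pos (by omega))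
  have hmod := Choose.choose_modEq_prod_range_choose_nat (p := p) hm (lt_of_le_of_lt hab hm)
  intro hdvd
  have hprod : p ∣ ∏ i ∈ Finset.range (b + 1), Nat.choose (b / p ^ i % p) (a / p ^ i % p) :=
    (Nat.modEq_zero_iff_dvd).1 ((hmod.symm.trans (Nat.modEq_zero_iff_dvd.2 hdvd)))
  rw [hp.prime.dvd_finset_prod_iff] at hprod
  obtain ⟨i, _, hi⟩ := hprod
  have hbi : b / p ^ i % p < p := Nat.mod_lt _ hp.pos
  have hai : a / p ^ i % p ≤ b / p ^ i % p := h i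
  have := Nat.choose_mul_factorial_mul_factorial hai
  have hdf : p ∣ Nat.factorial (b / p ^ i % p) := this ▸ (hi.mul_right _).mul_right _
  exact absurd ((Nat.Prime.dvd_factorial hp).1 hdf) (not_le.2 hbi)

set_option maxHeartbeats 1000000 in
/-- **Shadow-closedness.**
If `𝓕` is linear, affine-invariant and monomially closed, `e, e' ∈ {0,…,q-1}^n` with
`e ≤_p e'` coordinatewise, and `x^{e'} ∈ 𝓕`, then `x^e ∈ 𝓕`. -/
theorem shadow_closed (p ℓ q : ℕ) (hp : p.Prime) (hℓ : 1 ≤ ℓ) (hq : q = p ^ ℓ)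
    (F : Type) [Field F] [Fintype F] (hcard : Fintype.card F = q)
    (n : ℕ) (𝓕 : Set ((Fin n → F) → F))
    (hlin : LinearFamily 𝓕) (haff : AffineInvariant 𝓕) (hmon : MonomiallyClosed q 𝓕)
    (e e' : Fin n → ℕ) (he : ∀ i, e i ≤ q - 1) (he' : ∀ i, e' i ≤ q - 1)
    (hle : ∀ i, digitLE p (e i) (e' i)) (hmem : monFn e' ∈ 𝓕) :
    monFn e ∈ 𝓕 := by
  classical
  have hee : ∀ i, e i ≤ e' i := fun i => digitLE_le p hp.two_le _ _ (hle i)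
  -- characteristic
  have hcharF : CharP F p := by
    obtain ⟨r, hr⟩ := CharP.exists F
    haveI := hr
    have hrprime : r.Prime := CharP.char_is_prime F r
    have hdvd : r ∣ Fintype.card F := (CharP.cast_eq_zero_iff F r _).1 (by
      exact_mod_cast FiniteField.cast_card_eq_zero F)
    rw [hcard, hq] at hdvd
    have : r = p := (Nat.prime_dvd_prime_iff_eq hrprime hp).1 (hrprime.dvd_of_dvd_pow hdvd)
    rwa [this] at hr
  -- affine map T x = x + 1
  set T : (Fin n → F) → (Fin n → F) := fun x i => x i + 1 with hTdef
  have hTaff : IsAffineMap T := by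
    refine ⟨1, fun _ => 1, fun x => ?_⟩
    funext i
    simp [hTdef, Matrix.one_mulVec]
  have hf : (monFn e' ∘ T) ∈ 𝓕 := haff _ hmem T hTaff
  -- the polynomial
  set P : MvPolynomial (Fin n) F :=
    ∑ k ∈ Fintype.piFinset (fun i => Finset.range (e' i + 1)),
      MvPolynomial.monomial (Finsupp.equivFunOnFinite.symm k)
        ((∏ i, (e' i).choose (k i) : ℕ) : F) with hPdef
  have hPred : IsReducedPolyOf q P (monFn e' ∘ T) := by
    constructor
    · intro i
      refine le_trans (MvPolynomial.degreeOf_sum_le _ _ _) (Finset.sup_le fun k hk => ?_)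
      refine le_trans (degreeOf_monomial_le' _ _ _) ?_
      have : k i < e' i + 1 := by
        simpa using (Fintype.mem_piFinset.1 hk) i
      have : k i ≤ q - 1 := le_trans (by omega) (he' i)
      simpa using this
    · intro x
      have hexp : ∀ i : Fin n, (x i + 1) ^ e' i
          = ∑ j ∈ Finset.range (e' i + 1), ((e' i).choose j : F) * x i ^ j := by
        intro i
        rw [add_pow]
        refine Finset.sum_congr rfl fun j hj => by ring
      calc MvPolynomial.eval x P
          = ∑ k ∈ Fintype.piFinset (fun i => Finset.range (e' i + 1)),
              ((∏ i, (e' i).choose (k i) : ℕ) : F) * ∏ i, x i ^ k i := by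
            rw [hPdef, map_sum]
            refine Finset.sum_congr rfl fun k _ => ?_
            rw [MvPolynomial.eval_monomial]
            congr 1
            rw [Finsupp.prod_fintype]
            · simp
            · intro; simp
        _ = ∑ k ∈ Fintype.piFinset (fun i => Finset.range (e' i + 1)),
              ∏ i, (((e' i).choose (k i) : F) * x i ^ k i) := by
            refine Finset.sum_congr rfl fun k _ => ?_
            rw [Finset.prod_mul_distrib]
            push_cast
            ring
        _ = ∏ i, ∑ j ∈ Finset.range (e' i + 1), ((e' i).choose j : F) * x i ^ j :=
            (Finset.prod_univ_sum (fun i => Finset.range (e' i + 1)) (fun i j => ((e' i).choose j : F) * x i ^ j)).symm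
        _ = (monFn e' ∘ T) x := by
            simp only [Function.comp_apply, monFn, hTdef]
            exact Finset.prod_congr rfl fun i _ => (hexp i).symm
  have hcoeff : P.coeff (Finsupp.equivFunOnFinite.symm e)
      = ((∏ i, (e' i).choose (e i) : ℕ) : F) := by
    rw [hPdef, MvPolynomial.coeff_sum]
    have hmemp : e ∈ Fintype.piFinset (fun i => Finset.range (e' i + 1)) := by
      refine Fintype.mem_piFinset.2 fun i => Finset.mem_range.2 (by have := hee i; omega)
    have hstep : ∀ k ∈ Fintype.piFinset (fun i => Finset.range (e' i + 1)),
        MvPolynomial.coeff (Finsupp.equivFunOnFinite.symm e)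
          (MvPolynomial.monomial (Finsupp.equivFunOnFinite.symm k)
            ((∏ i, (e' i).choose (k i) : ℕ) : F))
        = if k = e then ((∏ i, (e' i).choose (k i) : ℕ) : F) else 0 := by
      intro k _
      rw [MvPolynomial.coeff_monomial]
      exact if_congr (EmbeddingLike.apply_eq_iff_eq _) rfl rfl
    rw [Finset.sum_congr rfl hstep, Finset.sum_ite_eq' _ e, if_pos hmemp]
  have hne : P.coeff (Finsupp.equivFunOnFinite.symm e) ≠ 0 := by
    rw [hcoeff, Ne, CharP.cast_eq_zero_iff F p, hp.prime.dvd_finset_prod_iff]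
    rintro ⟨i, _, hi⟩
    exact not_dvd_choose_of_digitLE p (e i) (e' i) hp (hle i) hi
  have hfin := hmon _ hf P hPred _ hne
  have heq : (fun i => (Finsupp.equivFunOnFinite.symm e) i) = e := by funext i; simp
  rwa [heq] at hfin
end

section
/- Let p be a prime, and let F be a family of functions F_p^n → F_p that is linear, affine-invariant, and monomially closed. Suppose the monomial function x^e lies in F for some e ∈ {0,…,p−1}^n. Then for every e' ∈ {0,…,p−1}^n with |e'|₁ ≤ |e|₁, the monomial function x^{e'} also lies in F. -/
/-!
Composing `x^e` with the affine shear `x_j ↦ x_j + x_i` and expanding binomially gives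
`∑_m C(e_j, m) x_j^m x_i^(e_j - m) ∏_{l ≠ j} x_l^(e_l)`; the coefficients are nonzero mod `p`
because `e_j < p`, and after reducing exponents of `x_i` with `x^p = x` the monomials stay
distinct (they differ in `x_j`), so monomial closure puts each of them in `𝓕`. In particular one
unit of degree can be moved from `x_j` to `x_i`; the translation `x_j ↦ x_j + 1` likewise lowers
`e_j`. While `e ≠ e'` there is `j` with `e_j > e'_j`; moving a unit from `x_j` to some `x_i` with
`e_i < e'_i`, or lowering `e_j` if there is no such `i`, decreases `∑_l (e_l - e'_l)₊` and keeps
`|e|₁ ≥ |e'|₁`.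
-/

open MvPolynomial Finset Function

section MonomialExtraction

variable {F : Type} [Field F] {q n : ℕ} {𝓕 : Set ((Fin n → F) → F)}

theorem MonomiallyClosed.monFn_mem_of_eq_sum (hmon : MonomiallyClosed q 𝓕) {ι : Type*}
    {s : Finset ι} {E : ι → Fin n → ℕ} (c : ι → F) (hE : Set.InjOn E s)
    (hbox : ∀ k ∈ s, ∀ l, E k l ≤ q - 1) {f : (Fin n → F) → F} (hf : f ∈ 𝓕)
    (heq : ∀ x, f x = ∑ k ∈ s, c k * monFn (E k) x) {m : ι} (hm : m ∈ s) (hc : c m ≠ 0) :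
    monFn (E m) ∈ 𝓕 := by
  classical
  set P : MvPolynomial (Fin n) F :=
    ∑ k ∈ s, monomial (Finsupp.equivFunOnFinite.symm (E k)) (c k)
  have hcoeff : P.coeff (Finsupp.equivFunOnFinite.symm (E m)) = c m := by
    rw [coeff_sum, sum_eq_single m (fun k hk hkm => ?_) (absurd hm), coeff_monomial, if_pos rfl]
    rw [coeff_monomial, if_neg fun h => hkm (hE hk hm (Finsupp.equivFunOnFinite.symm.injective h))]
  have hred : IsReducedPolyOf q P f := by
    refine ⟨fun i => degreeOf_le_iff.2 fun d hd => ?_, fun x => ?_⟩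
    · obtain ⟨k, hk, hdk⟩ := mem_biUnion.1 (support_sum hd)
      rw [mem_singleton.1 (support_monomial_subset hdk)]
      exact hbox k hk i
    · simp [P, heq, eval_monomial, Finsupp.prod_fintype, monFn]
  exact hmon f hf P hred _ (hcoeff ▸ hc)

end MonomialExtraction

section MonomialAlgebra

variable {F : Type} [Field F] {n : ℕ}

theorem monFn_add (a b : Fin n → ℕ) (x : Fin n → F) :
    monFn (a + b) x = monFn a x * monFn b x := by
  simp only [monFn, Pi.add_apply, pow_add, prod_mul_distrib]

theorem monFn_nsmul (k : ℕ) (a : Fin n → ℕ) (x : Fin n → F) :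
    monFn (k • a) x = monFn a x ^ k := by
  simp only [monFn, Pi.smul_apply, smul_eq_mul, ← prod_pow, ← pow_mul, mul_comm]

theorem monFn_zero : (monFn 0 : (Fin n → F) → F) = fun _ => 1 := by
  ext x
  simp [monFn]

theorem monFn_single (i : Fin n) (x : Fin n → F) : monFn (Pi.single i 1) x = x i := by
  simp [monFn, Pi.single_apply, pow_ite]

theorem monFn_update (e : Fin n → ℕ) (j : Fin n) (m : ℕ) (x : Fin n → F) :
    monFn (update e j m) x = x j ^ m * ∏ l ∈ {j}ᶜ, x l ^ e l := by
  rw [monFn, Fintype.prod_eq_mul_prod_compl j, update_self]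
  congr 1
  exact prod_congr rfl fun l hl => by rw [update_of_ne (by simpa using hl)]

theorem monFn_add_single (e : Fin n → ℕ) (j : Fin n) (c : F) (x : Fin n → F) :
    monFn e (x + Pi.single j c) = (x j + c) ^ e j * ∏ l ∈ {j}ᶜ, x l ^ e l := by
  rw [monFn, Fintype.prod_eq_mul_prod_compl j, Pi.add_apply, Pi.single_eq_same]
  congr 1
  exact prod_congr rfl fun l hl => by
    rw [Pi.add_apply, Pi.single_eq_of_ne (by simpa using hl), add_zero]

theorem monFn_add_single_monFn (e a : Fin n → ℕ) (j : Fin n) (x : Fin n → F) :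
    monFn e (x + Pi.single j (monFn a x)) =
      ∑ m ∈ range (e j + 1), ((e j).choose m : F) * monFn (update e j m + (e j - m) • a) x := by
  rw [monFn_add_single, add_pow, sum_mul]
  refine sum_congr rfl fun m _ => ?_
  rw [monFn_add, monFn_nsmul, monFn_update]
  ring

end MonomialAlgebra

section PrimeField

variable {p n : ℕ} [Fact p.Prime]

def reduceExp (q : ℕ) (g : Fin n → ℕ) : Fin n → ℕ :=
  fun l => if g l ≤ q - 1 then g l else g l - (q - 1)

theorem reduceExp_of_le {q : ℕ} {g : Fin n → ℕ} (hg : ∀ l, g l ≤ q - 1) : reduceExp q g = g :=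
  funext fun l => if_pos (hg l)

theorem reduceExp_le {q : ℕ} {g : Fin n → ℕ} {l : Fin n} (hg : g l ≤ 2 * (q - 1)) :
    reduceExp q g l ≤ q - 1 := by
  unfold reduceExp
  split_ifs <;> omega

theorem ZMod.pow_sub_card_sub_one (x : ZMod p) {t : ℕ} (ht : p ≤ t) :
    x ^ (t - (p - 1)) = x ^ t := by
  have hp := (Fact.out : p.Prime).two_le
  rcases eq_or_ne x 0 with rfl | hx
  · rw [zero_pow (by omega), zero_pow (by omega)]
  · rw [← mul_one (x ^ (t - (p - 1))), ← ZMod.pow_card_sub_one_eq_one hx, ← pow_add,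
      Nat.sub_add_cancel (by omega)]

theorem monFn_reduceExp (g : Fin n → ℕ) :
    (monFn (reduceExp p g) : (Fin n → ZMod p) → ZMod p) = monFn g := by
  ext x
  refine prod_congr rfl fun l _ => ?_
  unfold reduceExp
  split_ifs with h
  · rfl
  · exact ZMod.pow_sub_card_sub_one _ (by omega)

theorem ZMod.natCast_choose_ne_zero {m k : ℕ} (hm : m ≤ p - 1) (hk : k ≤ m) :
    (m.choose k : ZMod p) ≠ 0 := by
  have hp : p.Prime := Fact.out
  have := hp.two_le
  rw [Ne, ZMod.natCast_eq_zero_iff]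
  exact fun h => hp.one_lt.ne' ((hp.coprime_choose_of_lt (by omega) hk).eq_one_of_dvd h)

variable {𝓕 : Set ((Fin n → ZMod p) → ZMod p)} {e : Fin n → ℕ}

theorem monFn_reduceExp_shear_mem (haff : AffineInvariant 𝓕) (hmon : MonomiallyClosed p 𝓕)
    (he : ∀ l, e l ≤ p - 1) (hmem : monFn e ∈ 𝓕) {j : Fin n} {a : Fin n → ℕ} (haj : a j = 0)
    (ha : ∀ l, a l ≤ 1) (hT : IsAffineMap fun x : Fin n → ZMod p => x + Pi.single j (monFn a x))
    {m : ℕ} (hm : m ≤ e j) :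
    monFn (reduceExp p (update e j m + (e j - m) • a)) ∈ 𝓕 := by
  have hexp : ∀ k l, (update e j k + (e j - k) • a) l = update e j k l + (e j - k) * a l :=
    fun _ _ => rfl
  refine hmon.monFn_mem_of_eq_sum (s := range (e j + 1))
    (E := fun k => reduceExp p (update e j k + (e j - k) • a)) (fun k => ((e j).choose k : ZMod p))
    (fun k₁ hk₁ k₂ hk₂ h => ?_) (fun k hk l => reduceExp_le ?_) (haff _ hmem _ hT)
    (fun x => by simp only [comp_apply, monFn_add_single_monFn, monFn_reduceExp])
    (mem_range.2 (by omega)) (ZMod.natCast_choose_ne_zero (he j) hm)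
  · have hk : ∀ k ∈ range (e j + 1), reduceExp p (update e j k + (e j - k) • a) j = k := by
      intro k hk
      have := mem_range.1 hk
      have := he j
      rw [reduceExp, hexp, haj, update_self, mul_zero, add_zero, if_pos (by omega)]
    exact (hk k₁ hk₁).symm.trans ((congrFun h j).trans (hk k₂ hk₂))
  · have := he l
    have := he j
    have := mem_range.1 hk
    have : (e j - k) * a l ≤ e j - k := mul_le_of_le_one_right (Nat.zero_le _) (ha l)
    rw [hexp, update_apply]
    split_ifs <;> omega

theorem monFn_update_mem_of_le (haff : AffineInvariant 𝓕) (hmon : MonomiallyClosed p 𝓕)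
    (he : ∀ l, e l ≤ p - 1) (hmem : monFn e ∈ 𝓕) (j : Fin n) {m : ℕ} (hm : m ≤ e j) :
    monFn (update e j m) ∈ 𝓕 := by
  have hT : IsAffineMap fun x : Fin n → ZMod p => x + Pi.single j (monFn 0 x) :=
    ⟨1, Pi.single j 1, fun x => by rw [Matrix.one_mulVec, monFn_zero]⟩
  have h := monFn_reduceExp_shear_mem haff hmon he hmem (a := 0) rfl (fun _ => Nat.zero_le _) hT
    hm
  rwa [smul_zero, add_zero, reduceExp_of_le] at h
  intro l
  rw [update_apply]
  split_ifs with hl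
  · exact hm.trans (hl ▸ he l)
  · exact he l

theorem monFn_transfer_mem (haff : AffineInvariant 𝓕) (hmon : MonomiallyClosed p 𝓕)
    (he : ∀ l, e l ≤ p - 1) (hmem : monFn e ∈ 𝓕) {i j : Fin n} (hij : i ≠ j) (hj : 0 < e j)
    (hi : e i < p - 1) :
    monFn (update e j (e j - 1) + Pi.single i 1) ∈ 𝓕 := by
  have hT : IsAffineMap fun x : Fin n → ZMod p => x + Pi.single j (monFn (Pi.single i 1) x) :=
    ⟨1 + Matrix.single j i 1, 0, fun x => by
      rw [Matrix.add_mulVec, Matrix.one_mulVec, Matrix.single_mulVec, one_mul, add_zero,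
        ← monFn_single i x]
      rfl⟩
  have h := monFn_reduceExp_shear_mem haff hmon he hmem (Pi.single_eq_of_ne hij.symm 1)
    (fun l => by rw [Pi.single_apply]; split_ifs <;> omega) hT (m := e j - 1) (by omega)
  rwa [show e j - (e j - 1) = 1 by omega, one_smul, reduceExp_of_le] at h
  intro l
  have := he l
  simp only [Pi.add_apply, update_apply, Pi.single_apply]
  split_ifs <;> subst_vars <;> omega

theorem exists_closer_monFn_mem (haff : AffineInvariant 𝓕) (hmon : MonomiallyClosed p 𝓕)
    {f g : Fin n → ℕ} (hf : ∀ l, f l ≤ p - 1) (hg : ∀ l, g l ≤ p - 1) (hmem : monFn f ∈ 𝓕)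
    (hsum : ∑ l, g l ≤ ∑ l, f l) (hfg : f ≠ g) :
    ∃ f' : Fin n → ℕ, (∀ l, f' l ≤ p - 1) ∧ monFn f' ∈ 𝓕 ∧ ∑ l, g l ≤ ∑ l, f' l ∧
      ∑ l, (f' l - g l) < ∑ l, (f l - g l) := by
  obtain ⟨j, hj⟩ : ∃ j, g j < f j := by
    by_contra! h
    have hsum_eq := le_antisymm (sum_le_sum fun l _ => h l) hsum
    exact hfg (funext fun l => (sum_eq_sum_iff_of_le fun l _ => h l).1 hsum_eq l (mem_univ l))
  by_cases hgf : ∃ i, f i < g i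
  · obtain ⟨i, hi⟩ := hgf
    have hij : i ≠ j := by rintro rfl; omega
    have hf' : ∀ l, (update f j (f j - 1) + Pi.single i 1 : Fin n → ℕ) l =
        if l = i then f i + 1 else if l = j then f j - 1 else f l := by
      intro l
      simp only [Pi.add_apply, update_apply, Pi.single_apply]
      split_ifs <;> subst_vars <;> omega
    have := hg i
    refine ⟨_, fun l => ?_, monFn_transfer_mem haff hmon hf hmem hij (by omega) (by omega), ?_,
      sum_lt_sum (fun l _ => ?_) ⟨j, mem_univ j, ?_⟩⟩
    · have := hf l
      rw [hf']
      split_ifs <;> subst_vars <;> omega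
    · have hupd : ∑ l, update f j (f j - 1) l + f j = ∑ l, f l + (f j - 1) := by
        rw [sum_update_of_mem (mem_univ j), sum_eq_add_sum_sdiff_singleton_of_mem (mem_univ j) f]
        ring
      simp only [Pi.add_apply, sum_add_distrib, sum_pi_single', mem_univ, if_true]
      omega
    · rw [hf']
      split_ifs <;> subst_vars <;> omega
    · rw [hf', if_neg hij.symm, if_pos rfl]
      omega
  · simp only [not_exists, not_lt] at hgf
    have hle : ∀ l, g l ≤ update f j (f j - 1) l ∧ update f j (f j - 1) l ≤ f l := by
      intro l
      rw [update_apply]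
      split_ifs with hl
      · subst hl
        omega
      · exact ⟨hgf l, le_rfl⟩
    refine ⟨_, fun l => (hle l).2.trans (hf l),
      monFn_update_mem_of_le haff hmon hf hmem j (Nat.sub_le _ 1), sum_le_sum fun l _ => (hle l).1,
      sum_lt_sum (fun l _ => Nat.sub_le_sub_right (hle l).2 _) ⟨j, mem_univ j, ?_⟩⟩
    rw [update_self]
    omega

end PrimeField

theorem prime_shadow_closed_general (p : ℕ) [Fact p.Prime]
    (n : ℕ) (𝓕 : Set ((Fin n → ZMod p) → ZMod p))
    (haff : AffineInvariant 𝓕) (hmon : MonomiallyClosed p 𝓕)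
    (e : Fin n → ℕ) (he : ∀ i, e i ≤ p - 1) (hmem : monFn e ∈ 𝓕)
    (e' : Fin n → ℕ) (he' : ∀ i, e' i ≤ p - 1) (hsum : ∑ i, e' i ≤ ∑ i, e i) :
    monFn e' ∈ 𝓕 := by
  induction hD : ∑ l, (e l - e' l) using Nat.strong_induction_on generalizing e with
  | _ D ih =>
    by_cases hee' : e = e'
    · exact hee' ▸ hmem
    obtain ⟨f, hf, hfmem, hfsum, hlt⟩ := exists_closer_monFn_mem haff hmon he he' hmem hsum hee'
    exact ih _ (hD ▸ hlt) f hf hfmem hfsum rfl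

/-- **Prime-field shadow lemma.**
Over a prime field `F_p`, if `𝓕` is linear, affine-invariant and monomially closed,
`x^e ∈ 𝓕` for some `e ∈ {0,…,p-1}^n`, and `e' ∈ {0,…,p-1}^n` satisfies `|e'|₁ ≤ |e|₁`,
then `x^{e'} ∈ 𝓕`. -/
theorem prime_shadow_closed (p : ℕ) [Fact p.Prime]
    (n : ℕ) (𝓕 : Set ((Fin n → ZMod p) → ZMod p))
    (hlin : LinearFamily 𝓕) (haff : AffineInvariant 𝓕) (hmon : MonomiallyClosed p 𝓕)
    (e : Fin n → ℕ) (he : ∀ i, e i ≤ p - 1) (hmem : monFn e ∈ 𝓕)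
    (e' : Fin n → ℕ) (he' : ∀ i, e' i ≤ p - 1) (hsum : ∑ i, e' i ≤ ∑ i, e i) :
    monFn e' ∈ 𝓕 :=
  prime_shadow_closed_general p n 𝓕 haff hmon e he hmem e' he' hsum
end

section
/- Let p be a prime and let k ≥ 1, d ≥ 0 be integers with d+1 ≤ k(p−1). Let S ⊆ F_p^k be a set with |S| ≥ C(d+k+1, k) + 1. Then there exists a nonzero function h' : F_p^k → F_p with supp(h') ⊆ S whose reduced polynomial has total degree at most k(p−1) − (d+1). -/
open MvPolynomial

noncomputable def funToPoly (p k : ℕ) [Fact p.Prime] :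
    ((Fin k → ZMod p) → ZMod p) ≃ₗ[ZMod p] MvPolynomial.R (Fin k) (ZMod p) :=
  (LinearEquiv.ofBijective (MvPolynomial.evalᵢ (Fin k) (ZMod p))
    ⟨LinearMap.ker_eq_bot.mp (MvPolynomial.ker_evalₗ _ _),
     LinearMap.range_eq_top.mp (MvPolynomial.range_evalᵢ _ _)⟩).symm

noncomputable def polyOf (p k : ℕ) [Fact p.Prime] (f : (Fin k → ZMod p) → ZMod p) :
    MvPolynomial (Fin k) (ZMod p) :=
  (show (MvPolynomial.restrictDegree (Fin k) (ZMod p) (Fintype.card (ZMod p) - 1)) from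
    funToPoly p k f).1

lemma polyOf_mem (p k : ℕ) [Fact p.Prime] (f : (Fin k → ZMod p) → ZMod p) :
    polyOf p k f ∈ MvPolynomial.restrictDegree (Fin k) (ZMod p) (Fintype.card (ZMod p) - 1) :=
  (show (MvPolynomial.restrictDegree (Fin k) (ZMod p) (Fintype.card (ZMod p) - 1)) from
    funToPoly p k f).2

lemma eval_polyOf (p k : ℕ) [Fact p.Prime] (f : (Fin k → ZMod p) → ZMod p)
    (x : Fin k → ZMod p) : MvPolynomial.eval x (polyOf p k f) = f x := by
  have h : (MvPolynomial.evalᵢ (Fin k) (ZMod p)) (funToPoly p k f) = f := by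
    exact (funToPoly p k).symm_apply_apply f
  have := congrFun h x
  exact this

noncomputable def polyOfₗ (p k : ℕ) [Fact p.Prime] :
    ((Fin k → ZMod p) → ZMod p) →ₗ[ZMod p] MvPolynomial (Fin k) (ZMod p) where
  toFun f := polyOf p k f
  map_add' f g := by simp [polyOf, map_add]; rfl
  map_smul' c f := by simp [polyOf, map_smul]; rfl

lemma card_hi (p k d : ℕ) [Fact p.Prime] (hd : d + 1 ≤ k * (p - 1)) :
    Fintype.card {v : Fin k → Fin p // k * (p - 1) - (d + 1) < ∑ i, (v i : ℕ)}
      ≤ (d + k).choose k := by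
  have hp1 : 1 ≤ p := (Fact.out : p.Prime).one_lt.le
  have key : ∀ v : {v : Fin k → Fin p // k * (p - 1) - (d + 1) < ∑ i, (v i : ℕ)},
      ∑ i, ((p - 1) - (v.1 i : ℕ)) ≤ d := by
    rintro ⟨v, hv⟩
    show ∑ i, ((p - 1) - (v i : ℕ)) ≤ d
    have hv : k * (p - 1) - (d + 1) < ∑ i, (v i : ℕ) := hv
    have hle : ∀ i, (v i : ℕ) ≤ p - 1 := fun i => Nat.le_sub_one_of_lt (v i).2
    have h1 : ∑ i, ((p - 1) - (v i : ℕ)) = k * (p - 1) - ∑ i, (v i : ℕ) := by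
      rw [Finset.sum_tsub_distrib _ (fun i _ => hle i)]
      simp [Finset.sum_const, mul_comm]
    have h2 : ∑ i, (v i : ℕ) ≤ k * (p - 1) := by
      calc ∑ i, (v i : ℕ) ≤ ∑ _i : Fin k, (p - 1) := Finset.sum_le_sum fun i _ => hle i
        _ = k * (p - 1) := by simp [mul_comm]
    omega
  let g : {v : Fin k → Fin p // k * (p - 1) - (d + 1) < ∑ i, (v i : ℕ)} →
      Sym (Option (Fin k)) d := fun v =>
    ⟨(Finsupp.equivFunOnFinite.symm (fun o : Option (Fin k) =>
        o.elim (d - ∑ i, ((p - 1) - (v.1 i : ℕ))) (fun i => (p - 1) - (v.1 i : ℕ)))).toMultiset, by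
      rw [Finsupp.card_toMultiset, Finsupp.sum_fintype _ _ (fun _ => rfl)]
      rw [Fintype.sum_option]
      simp only [Finsupp.coe_equivFunOnFinite_symm, Option.elim, id_eq]
      have := key v
      omega⟩
  have hginj : Function.Injective g := by
    intro u₁ u₂ hg
    have hcount : ∀ i : Fin k, (p - 1) - (u₁.1 i : ℕ) = (p - 1) - (u₂.1 i : ℕ) := by
      intro i
      have := congrArg (fun s : Sym (Option (Fin k)) d => Multiset.count (some i) s.1) hg
      simpa [g, Finsupp.count_toMultiset] using this
    have hle₁ : ∀ i, (u₁.1 i : ℕ) ≤ p - 1 := fun i => Nat.le_sub_one_of_lt (u₁.1 i).2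
    have hle₂ : ∀ i, (u₂.1 i : ℕ) ≤ p - 1 := fun i => Nat.le_sub_one_of_lt (u₂.1 i).2
    apply Subtype.ext
    funext i
    exact Fin.ext (by have := hcount i; have := hle₁ i; have := hle₂ i; omega)
  calc Fintype.card {v : Fin k → Fin p // k * (p - 1) - (d + 1) < ∑ i, (v i : ℕ)}
      ≤ Fintype.card (Sym (Option (Fin k)) d) := Fintype.card_le_of_injective g hginj
    _ = (Fintype.card (Option (Fin k)) + d - 1).choose d := Sym.card_sym_eq_choose d
    _ = (k + d).choose d := by simp
    _ = (d + k).choose k := by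
        rw [add_comm k d, ← Nat.choose_symm (Nat.le_add_left k d), Nat.add_sub_cancel]

/-- **Existence of a nonzero low-degree function supported on a given set.**
For a prime `p`, `k ≥ 1`, `d + 1 ≤ k(p-1)`, and any `S ⊆ F_p^k` with
`|S| ≥ C(d+k+1, k) + 1`, there is a nonzero `h' : F_p^k → F_p` with `supp(h') ⊆ S` whose
reduced polynomial has total degree at most `k(p-1) - (d+1)`. -/
theorem exists_low_degree_supported (p : ℕ) [Fact p.Prime] (k d : ℕ) (hk : 1 ≤ k)
    (hd : d + 1 ≤ k * (p - 1)) (S : Finset (Fin k → ZMod p))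
    (hS : (d + k + 1).choose k + 1 ≤ S.card) :
    ∃ h' : (Fin k → ZMod p) → ZMod p, h' ≠ 0 ∧ (∀ x, h' x ≠ 0 → x ∈ S) ∧
      ∃ P : MvPolynomial (Fin k) (ZMod p), IsReducedPolyOf p P h' ∧
        P.totalDegree ≤ k * (p - 1) - (d + 1) := by
  classical
  have hp1 : 1 < p := (Fact.out : p.Prime).one_lt
  set D := k * (p - 1) - (d + 1) with hD
  clear_value D
  let mono : (Fin k → Fin p) → (Fin k →₀ ℕ) :=
    fun v => Finsupp.equivFunOnFinite.symm fun i => (v i : ℕ)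
  let T : ((Fin k → ZMod p) → ZMod p) →ₗ[ZMod p]
      ({x : Fin k → ZMod p // x ∉ S} → ZMod p) ×
      ({v : Fin k → Fin p // D < ∑ i, (v i : ℕ)} → ZMod p) :=
    LinearMap.prod (LinearMap.funLeft (ZMod p) (ZMod p) Subtype.val)
      (LinearMap.pi fun v => (MvPolynomial.lcoeff (ZMod p) (mono v.1)).comp (polyOfₗ p k))
  have hnotinj : ¬ Function.Injective T := by
    intro hinj
    have h1 := LinearMap.finrank_le_finrank_of_injective hinj
    rw [Module.finrank_fintype_fun_eq_card, Module.finrank_prod,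
      Module.finrank_fintype_fun_eq_card, Module.finrank_fintype_fun_eq_card] at h1
    have hcards : S.card ≤ Fintype.card (Fin k → ZMod p) := by
      simpa using Finset.card_le_card (Finset.subset_univ S)
    have hcompl : Fintype.card {x : Fin k → ZMod p // x ∉ S}
        = Fintype.card (Fin k → ZMod p) - S.card := by
      rw [Fintype.card_subtype_compl]
      congr 1
      exact Fintype.card_coe S
    have hhi := card_hi p k d hd
    rw [← hD] at hhi
    have hch : (d + k).choose k ≤ (d + k + 1).choose k := Nat.choose_le_choose k (Nat.le_succ _)
    clear hinj
    clear T mono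
    have hle2 : Fintype.card {v : Fin k → Fin p // D < ∑ i, (v i : ℕ)} ≤ (d + k + 1).choose k :=
      le_trans hhi hch
    rw [hcompl] at h1
    generalize hA : Fintype.card (Fin k → ZMod p) = A at h1 hcards
    generalize hB : Fintype.card {v : Fin k → Fin p // D < ∑ i, (v i : ℕ)} = B at h1 hle2
    generalize hC : (d + k + 1).choose k = C at hS hle2
    clear hcompl hhi hch hD
    clear * - h1 hcards hle2 hS
    omega
  obtain ⟨a, b, hab, hne⟩ := Function.not_injective_iff.mp hnotinj
  have hT : T (a - b) = 0 := by rw [map_sub, hab, sub_self]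
  refine ⟨a - b, sub_ne_zero.mpr hne, ?_, ?_⟩
  · intro x hx
    by_contra hxS
    have h0 := congrFun (congrArg Prod.fst hT) ⟨x, hxS⟩
    simp only [T, LinearMap.prod_apply, Function.prod, LinearMap.funLeft_apply,
      Prod.fst_zero, Pi.zero_apply] at h0
    exact hx h0
  · refine ⟨polyOf p k (a - b), ⟨?_, eval_polyOf p k (a - b)⟩, ?_⟩
    · intro i
      have hmem := polyOf_mem p k (a - b)
      rw [MvPolynomial.mem_restrictDegree] at hmem
      rw [MvPolynomial.degreeOf_le_iff]
      intro m hm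
      have := hmem m hm i
      rwa [ZMod.card] at this
    · rw [MvPolynomial.totalDegree]
      apply Finset.sup_le
      intro m hm
      by_contra hdeg
      push_neg at hdeg
      have hmem := polyOf_mem p k (a - b)
      rw [MvPolynomial.mem_restrictDegree] at hmem
      have hle : ∀ i, m i ≤ p - 1 := by
        intro i; have := hmem m hm i; rwa [ZMod.card] at this
      have hsum : (m.sum fun _ e => e) = ∑ i, m i :=
        Finsupp.sum_fintype _ _ (fun _ => rfl)
      let v : Fin k → Fin p := fun i => ⟨m i, by have := hle i; omega⟩
      have hv : D < ∑ i, (v i : ℕ) := by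
        have : ∑ i, (v i : ℕ) = ∑ i, m i := by
          apply Finset.sum_congr rfl; intro i _; rfl
        omega
      have h0 := congrFun (congrArg Prod.snd hT) ⟨v, hv⟩
      simp only [T, LinearMap.prod_apply, Function.prod, LinearMap.pi_apply, LinearMap.comp_apply,
        Prod.snd_zero, Pi.zero_apply, MvPolynomial.lcoeff_apply] at h0
      have hmono : mono v = m := by
        ext i
        simp [mono, v]
      rw [hmono] at h0
      have : polyOfₗ p k (a - b) = polyOf p k (a - b) := rfl
      rw [this] at h0
      exact (MvPolynomial.mem_support_iff.mp hm) h0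
end

section
/- Let p be a prime and let d ≥ 0 and k ≥ d+1 be integers. For every set S ⊆ F_p^k with |S| ≥ C(d+k+1, k) + 1, there exists a function h : F_p^k → F_p such that the reduced polynomial of h has total degree exactly k(p−1) − (d+1) and supp(h) ⊆ S. -/
open MvPolynomial Finset

namespace DualAux

variable {p : ℕ} [hp : Fact p.Prime] {k : ℕ}





lemma pm1_pos : 0 < p - 1 := by
  have := hp.out.two_le; omega

lemma sum_pow_eq (j : ℕ) :
    (∑ x : ZMod p, x ^ j) = if j ≠ 0 ∧ (p - 1) ∣ j then -1 else 0 := by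
  classical
  have hq : Fintype.card (ZMod p) = p := ZMod.card p
  rcases Nat.eq_zero_or_pos j with rfl | hj
  · simp only [pow_zero, Finset.sum_const, card_univ, hq, nsmul_eq_mul, mul_one,
      ZMod.natCast_self, ne_eq, not_true_eq_false, false_and, if_false]
  · have h1 : ∑ x : ZMod p, x ^ j = ∑ x ∈ (univ \ {(0 : ZMod p)}), x ^ j := by
      rw [← Finset.sum_sdiff (Finset.subset_univ {(0:ZMod p)}), Finset.sum_singleton,
        zero_pow hj.ne', add_zero]
    let φ : (ZMod p)ˣ ↪ ZMod p := ⟨fun x => x, fun _ _ h => Units.ext h⟩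
    have hmap : univ.map φ = univ \ {(0 : ZMod p)} := by
      ext x
      simp only [mem_map, mem_univ, Function.Embedding.coeFn_mk, true_and, mem_sdiff,
        mem_singleton]
      exact isUnit_iff_ne_zero
    have h2 : ∑ x ∈ (univ \ {(0 : ZMod p)}), x ^ j = ∑ u : (ZMod p)ˣ, (u : ZMod p) ^ j := by
      rw [← hmap, Finset.sum_map]
      rfl
    have h3 := FiniteField.sum_pow_units (ZMod p) j
    rw [hq] at h3
    rw [h1, h2, h3]
    simp [hj.ne']


lemma moment_eq (P : MvPolynomial (Fin k) (ZMod p)) (b : Fin k → ℕ) :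
    ∑ x : Fin k → ZMod p, eval x P * ∏ i, x i ^ b i
      = ∑ a ∈ P.support, P.coeff a * ∏ i, (∑ t : ZMod p, t ^ (a i + b i)) := by
  classical
  have h1 : ∀ x : Fin k → ZMod p,
      eval x P * ∏ i, x i ^ b i = ∑ a ∈ P.support, P.coeff a * ∏ i, x i ^ (a i + b i) := by
    intro x
    rw [eval_eq', Finset.sum_mul]
    refine Finset.sum_congr rfl fun a _ => ?_
    rw [mul_assoc, ← Finset.prod_mul_distrib]
    simp_rw [pow_add]
  simp_rw [h1]
  rw [Finset.sum_comm]
  refine Finset.sum_congr rfl fun a _ => ?_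
  rw [← Finset.mul_sum, Fintype.prod_sum]




section Tri
variable (P : MvPolynomial (Fin k) (ZMod p))
  (hcap : ∀ a ∈ P.support, ∀ i, (a : Fin k →₀ ℕ) i ≤ p - 1)
  (d : ℕ)
  (hmom : ∀ b : Fin k → ℕ, (∑ i, b i) ≤ d →
    ∑ x : Fin k → ZMod p, eval x P * ∏ i, x i ^ b i = 0)

include hcap in
lemma capsum {a : Fin k →₀ ℕ} (ha : a ∈ P.support) : ∑ i, a i ≤ k * (p - 1) := by
  calc ∑ i, a i ≤ ∑ _i : Fin k, (p - 1) := Finset.sum_le_sum fun i _ => hcap a ha i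
    _ = k * (p - 1) := by simp [Finset.sum_const, mul_comm]

include hcap hmom in
lemma vanish : ∀ j, j ≤ d → ∀ a : Fin k →₀ ℕ, (∑ i, a i) + j = k * (p - 1) → P.coeff a = 0 := by
  intro j
  induction j using Nat.strong_induction_on with
  | _ j IH =>
    intro hjd a hasum
    by_contra hne
    have hasup : a ∈ P.support := mem_support_iff.mpr hne
    have hacap : ∀ i, a i ≤ p - 1 := fun i => hcap a hasup i
    set b : Fin k → ℕ := fun i => (p - 1) - a i with hb
    have habsum : ∀ i, a i + b i = p - 1 := fun i => by
      have := hacap i; simp only [hb]; omega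
    have hbsum : ∑ i, b i = j := by
      have h1 : ∑ i, (a i + b i) = ∑ _i : Fin k, (p-1) := Finset.sum_congr rfl fun i _ => habsum i
      rw [Finset.sum_add_distrib] at h1
      simp only [Finset.sum_const, card_univ, Fintype.card_fin, smul_eq_mul] at h1
      omega
    have h0 := hmom b (by omega)
    rw [moment_eq] at h0
    rw [Finset.sum_eq_single a ?_ ?_] at h0
    · have hprod : ∏ i, (∑ t : ZMod p, t ^ (a i + b i)) = (-1 : ZMod p) ^ k := by
        calc ∏ i, (∑ t : ZMod p, t ^ (a i + b i)) = ∏ _i : Fin k, (-1 : ZMod p) := by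
              refine Finset.prod_congr rfl fun i _ => ?_
              rw [habsum i, sum_pow_eq (p := p)]
              have := pm1_pos (p := p)
              simp [this.ne']
          _ = (-1 : ZMod p) ^ k := by simp
      rw [hprod] at h0
      rcases mul_eq_zero.1 h0 with h | h
      · exact hne h
      · exact (pow_ne_zero k (neg_ne_zero.2 one_ne_zero)) h
    · intro a' ha' hne'
      by_contra hterm
      have hc' : P.coeff a' ≠ 0 := fun h => hterm (by rw [h, zero_mul])
      have hprodne : ∏ i, (∑ t : ZMod p, t ^ (a' i + b i)) ≠ 0 :=
        fun h => hterm (by rw [h, mul_zero])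
      have hge : ∀ i, a i ≤ a' i := by
        intro i
        have hsnz : (∑ t : ZMod p, t ^ (a' i + b i)) ≠ 0 := by
          intro h; exact hprodne (Finset.prod_eq_zero (mem_univ i) h)
        rw [sum_pow_eq (p := p)] at hsnz
        by_cases hcond : (a' i + b i ≠ 0 ∧ (p - 1) ∣ (a' i + b i))
        · have hle := Nat.le_of_dvd (Nat.pos_of_ne_zero hcond.1) hcond.2
          have := habsum i
          omega
        · rw [if_neg hcond] at hsnz
          exact absurd rfl hsnz
      have hsum_le : ∑ i, a i ≤ ∑ i, a' i := Finset.sum_le_sum fun i _ => hge i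
      have hsum_ne : ∑ i, a i ≠ ∑ i, a' i := by
        intro hEq
        apply hne'
        have hlt : ¬ (∃ i ∈ univ, a i < a' i) := by
          intro ⟨i, _, hi⟩
          exact absurd hEq (Finset.sum_lt_sum (fun i _ => hge i) ⟨i, mem_univ i, hi⟩).ne
        push_neg at hlt
        ext i
        exact le_antisymm (hlt i (mem_univ i)) (hge i)
      have hcapsum : ∑ i, a' i ≤ k * (p - 1) := capsum P hcap ha'
      exact hc' (IH (k * (p-1) - ∑ i, a' i) (by omega) (by omega) a' (by omega))
    · intro h
      exact absurd hasup h

include hcap hmom in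
lemma coeff_of_moment_ne (b : Fin k → ℕ)
    (hble : ∀ i, b i ≤ p - 1) (hbsum : ∑ i, b i = d + 1)
    (hne : ∑ x : Fin k → ZMod p, eval x P * ∏ i, x i ^ b i ≠ 0) :
    ∃ a : Fin k →₀ ℕ, P.coeff a ≠ 0 ∧ (∑ i, a i) + (d + 1) = k * (p - 1) := by
  classical
  set a : Fin k →₀ ℕ := Finsupp.equivFunOnFinite.symm (fun i => (p - 1) - b i) with hadef
  have haval : ∀ i, a i = (p - 1) - b i := fun i => rfl
  have habsum : ∀ i, a i + b i = p - 1 := fun i => by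
    rw [haval i]; have := hble i; omega
  have hasum : (∑ i, a i) + (d + 1) = k * (p - 1) := by
    have h1 : ∑ i, (a i + b i) = ∑ _i : Fin k, (p-1) :=
      Finset.sum_congr rfl fun i _ => habsum i
    rw [Finset.sum_add_distrib] at h1
    simp only [Finset.sum_const, card_univ, Fintype.card_fin, smul_eq_mul] at h1
    omega
  refine ⟨a, ?_, hasum⟩
  rw [moment_eq] at hne
  rw [Finset.sum_eq_single a ?_ ?_] at hne
  · have hprod : ∏ i, (∑ t : ZMod p, t ^ (a i + b i)) = (-1 : ZMod p) ^ k := by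
      calc ∏ i, (∑ t : ZMod p, t ^ (a i + b i)) = ∏ _i : Fin k, (-1 : ZMod p) := by
            refine Finset.prod_congr rfl fun i _ => ?_
            rw [habsum i, sum_pow_eq (p := p)]
            have := pm1_pos (p := p)
            simp [this.ne']
        _ = (-1 : ZMod p) ^ k := by simp
    rw [hprod] at hne
    exact fun h => hne (by rw [h, zero_mul])
  · intro a' ha' hne'
    by_contra hterm
    have hc' : P.coeff a' ≠ 0 := fun h => hterm (by rw [h, zero_mul])
    have hprodne : ∏ i, (∑ t : ZMod p, t ^ (a' i + b i)) ≠ 0 :=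
      fun h => hterm (by rw [h, mul_zero])
    have hge : ∀ i, a i ≤ a' i := by
      intro i
      have hsnz : (∑ t : ZMod p, t ^ (a' i + b i)) ≠ 0 := by
        intro h; exact hprodne (Finset.prod_eq_zero (mem_univ i) h)
      rw [sum_pow_eq (p := p)] at hsnz
      by_cases hcond : (a' i + b i ≠ 0 ∧ (p - 1) ∣ (a' i + b i))
      · have hle := Nat.le_of_dvd (Nat.pos_of_ne_zero hcond.1) hcond.2
        have := habsum i
        omega
      · rw [if_neg hcond] at hsnz
        exact absurd rfl hsnz
    have hsum_le : ∑ i, a i ≤ ∑ i, a' i := Finset.sum_le_sum fun i _ => hge i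
    have hsum_ne : ∑ i, a i ≠ ∑ i, a' i := by
      intro hEq
      apply hne'
      have hlt : ¬ (∃ i ∈ univ, a i < a' i) := by
        intro ⟨i, _, hi⟩
        exact absurd hEq (Finset.sum_lt_sum (fun i _ => hge i) ⟨i, mem_univ i, hi⟩).ne
      push_neg at hlt
      ext i
      exact le_antisymm (hlt i (mem_univ i)) (hge i)
    have hcapsum : ∑ i, a' i ≤ k * (p - 1) := capsum P hcap ha'
    exact hc' (vanish P hcap d hmom (k * (p-1) - ∑ i, a' i) (by omega) a' (by omega))
  · intro h
    rw [notMem_support_iff.1 h, zero_mul]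

include hcap hmom in
lemma totalDegree_exact (b : Fin k → ℕ)
    (hble : ∀ i, b i ≤ p - 1) (hbsum : ∑ i, b i = d + 1)
    (hne : ∑ x : Fin k → ZMod p, eval x P * ∏ i, x i ^ b i ≠ 0) :
    P ≠ 0 ∧ P.totalDegree = k * (p - 1) - (d + 1) := by
  obtain ⟨a, ha, hasum⟩ := coeff_of_moment_ne P hcap d hmom b hble hbsum hne
  have hPne : P ≠ 0 := fun h => ha (by simp [h])
  have hma : a ∈ P.support := mem_support_iff.2 ha
  have hfs : ∀ c : Fin k →₀ ℕ, (c.sum fun _ e => e) = ∑ i, c i := fun c =>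
    Finsupp.sum_fintype _ _ fun _ => rfl
  have hle : P.totalDegree ≤ k * (p - 1) - (d + 1) := by
    rw [totalDegree]
    apply Finset.sup_le
    intro c hc
    rw [hfs c]
    by_contra hgt
    push_neg at hgt
    have hcsum : ∑ i, c i ≤ k * (p - 1) := capsum P hcap hc
    have := vanish P hcap d hmom (k * (p - 1) - ∑ i, c i) (by omega) c (by omega)
    exact (mem_support_iff.1 hc) this
  have hge : k * (p - 1) - (d + 1) ≤ P.totalDegree := by
    have h1 := le_totalDegree hma
    rw [hfs a] at h1
    omega
  exact ⟨hPne, le_antisymm hle hge⟩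

end Tri

noncomputable def polyOf (h : (Fin k → ZMod p) → ZMod p) : MvPolynomial (Fin k) (ZMod p) :=
  ∑ y : Fin k → ZMod p, h y • indicator y

lemma polyOf_mem (h : (Fin k → ZMod p) → ZMod p) :
    polyOf h ∈ restrictDegree (Fin k) (ZMod p) (p - 1) := by
  classical
  refine Submodule.sum_mem _ fun y _ => Submodule.smul_mem _ _ ?_
  have := indicator_mem_restrictDegree (K := ZMod p) y
  rwa [ZMod.card p] at this

lemma polyOf_cap (h : (Fin k → ZMod p) → ZMod p) :
    ∀ a ∈ (polyOf h).support, ∀ i, (a : Fin k →₀ ℕ) i ≤ p - 1 :=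
  (mem_restrictDegree _ _ _).1 (polyOf_mem h)

lemma polyOf_degreeOf (h : (Fin k → ZMod p) → ZMod p) (i : Fin k) :
    (polyOf h).degreeOf i ≤ p - 1 :=
  degreeOf_le_iff.2 fun a ha => polyOf_cap h a ha i

lemma eval_polyOf (h : (Fin k → ZMod p) → ZMod p) (x : Fin k → ZMod p) :
    eval x (polyOf h) = h x := by
  classical
  rw [polyOf, map_sum]
  rw [Finset.sum_eq_single x ?_ ?_]
  · rw [smul_eq_C_mul, map_mul, eval_C, eval_indicator_apply_eq_one, mul_one]
  · intro y _ hy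
    rw [smul_eq_C_mul, map_mul, eval_C, eval_indicator_apply_eq_zero x y (Ne.symm hy), mul_zero]
  · intro hx
    exact absurd (mem_univ x) hx

lemma totalDegree_le_of_cap (P : MvPolynomial (Fin k) (ZMod p))
    (hcap : ∀ a ∈ P.support, ∀ i, (a : Fin k →₀ ℕ) i ≤ p - 1) :
    P.totalDegree ≤ k * (p - 1) := by
  apply Finset.sup_le
  intro a ha
  have : (a.sum fun _ e => e) = ∑ i, a i := Finsupp.sum_fintype _ _ fun _ => rfl
  rw [this]
  calc ∑ i, a i ≤ ∑ _i : Fin k, (p - 1) := Finset.sum_le_sum fun i _ => hcap a ha i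
    _ = k * (p - 1) := by simp [mul_comm]

lemma totalDegree_indicator (y : Fin k → ZMod p) :
    (indicator y).totalDegree ≤ k * (p - 1) := by
  apply totalDegree_le_of_cap
  have := indicator_mem_restrictDegree (K := ZMod p) y
  rw [ZMod.card p] at this
  exact (mem_restrictDegree _ _ _).1 this


end DualAux
namespace DualAux

def expFinset (k d : ℕ) : Finset (Fin k → ℕ) :=
  (Fintype.piFinset fun _ : Fin k => Finset.range (d + 1)).filter fun b => ∑ i, b i ≤ d

lemma mem_expFinset {k d : ℕ} (b : Fin k → ℕ) :
    b ∈ expFinset k d ↔ ∑ i, b i ≤ d := by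
  constructor
  · intro hb
    exact (Finset.mem_filter.1 hb).2
  · intro hb
    refine Finset.mem_filter.2 ⟨Fintype.mem_piFinset.2 fun i => ?_, hb⟩
    rw [Finset.mem_range]
    have : b i ≤ ∑ j, b j := Finset.single_le_sum (fun j _ => Nat.zero_le _) (mem_univ i)
    omega

lemma card_expFinset : ∀ k d : ℕ, (expFinset k d).card ≤ (d + k).choose k := by
  intro k
  induction k with
  | zero =>
    intro d
    have : (expFinset 0 d) ⊆ {fun i => 0} := by
      intro b _
      simp only [Finset.mem_singleton]
      funext i
      exact absurd i.2 (by omega)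
    calc (expFinset 0 d).card ≤ ({fun _ => 0} : Finset (Fin 0 → ℕ)).card :=
        Finset.card_le_card this
      _ = 1 := Finset.card_singleton _
      _ ≤ (d + 0).choose 0 := by simp
  | succ k IH =>
    intro d
    have hmaps : ∀ b ∈ expFinset (k+1) d, b 0 ∈ Finset.range (d+1) := by
      intro b hb
      rw [mem_expFinset] at hb
      rw [Finset.mem_range]
      have : b 0 ≤ ∑ j, b j := Finset.single_le_sum (fun j _ => Nat.zero_le _) (mem_univ 0)
      omega
    rw [Finset.card_eq_sum_card_fiberwise hmaps]
    have hfiber : ∀ j ∈ Finset.range (d+1),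
        ((expFinset (k+1) d).filter fun b => b 0 = j).card ≤ ((d - j) + k).choose k := by
      intro j hj
      rw [Finset.mem_range] at hj
      refine le_trans (Finset.card_le_card_of_injOn (fun b => b ∘ Fin.succ) ?_ ?_)
        (IH (d - j))
      · intro b hb
        rw [Finset.mem_coe, mem_expFinset]
        rw [Finset.mem_coe, Finset.mem_filter, mem_expFinset] at hb
        obtain ⟨hsum, hb0⟩ := hb
        rw [Fin.sum_univ_succ, hb0] at hsum
        simp only [Function.comp]
        omega
      · intro b1 hb1 b2 hb2 heq
        rw [Finset.mem_coe, Finset.mem_filter] at hb1 hb2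
        funext i
        induction i using Fin.cases with
        | zero => rw [hb1.2, hb2.2]
        | succ i => exact congrFun heq i
    calc ∑ j ∈ Finset.range (d+1), ((expFinset (k+1) d).filter fun b => b 0 = j).card
        ≤ ∑ j ∈ Finset.range (d+1), ((d - j) + k).choose k :=
          Finset.sum_le_sum hfiber
      _ = ∑ j ∈ Finset.range (d+1), (j + k).choose k := by
          rw [← Finset.sum_range_reflect]
          refine Finset.sum_congr rfl fun j hj => ?_
          rw [Finset.mem_range] at hj
          congr 1
          omega
      _ = ∑ m ∈ Finset.Icc k (d + k), m.choose k := by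
          rw [← Finset.Ico_add_one_right_eq_Icc, Finset.sum_Ico_eq_sum_range]
          have h1 : d + k + 1 - k = d + 1 := by omega
          rw [h1]
          exact Finset.sum_congr rfl fun j _ => by rw [Nat.add_comm]
      _ = (d + k + 1).choose (k + 1) := Nat.sum_Icc_choose _ _
      _ = (d + (k+1)).choose (k+1) := rfl


variable {p : ℕ} [hp : Fact p.Prime] {k : ℕ}




section Span
variable (S : Finset (Fin k → ZMod p))

noncomputable def mono (b : Fin k → ℕ) : ({x // x ∈ S} → ZMod p) :=
  fun z => ∏ i, (z : Fin k → ZMod p) i ^ b i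

noncomputable def G (t : ℕ) : Submodule (ZMod p) ({x // x ∈ S} → ZMod p) :=
  Submodule.span (ZMod p) {v | ∃ b : Fin k → ℕ, (∑ i, b i) ≤ t ∧ v = mono S b}

lemma mono_mem {t} {b : Fin k → ℕ} (hb : ∑ i, b i ≤ t) : mono S b ∈ G S t :=
  Submodule.subset_span ⟨b, hb, rfl⟩

lemma G_le {t t'} (h : t ≤ t') : G S t ≤ G S t' :=
  Submodule.span_mono fun v ⟨b, hb, hv⟩ => ⟨b, hb.trans h, hv⟩

noncomputable def mulCoord (i0 : Fin k) :
    ({x // x ∈ S} → ZMod p) →ₗ[ZMod p] ({x // x ∈ S} → ZMod p) where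
  toFun v := fun z => (z : Fin k → ZMod p) i0 * v z
  map_add' u v := by funext z; simp [mul_add]
  map_smul' c v := by funext z; simp only [Pi.smul_apply, smul_eq_mul, RingHom.id_apply]; ring

lemma sum_update (g : Fin k → ℕ) (i0 : Fin k) (v : ℕ) :
    (∑ i, (Function.update g i0 v) i) + g i0 = (∑ i, g i) + v := by
  classical
  rw [Finset.sum_update_of_mem (mem_univ i0)]
  have h2 : ∑ i, g i = g i0 + ∑ i ∈ univ.erase i0, g i :=
    (Finset.add_sum_erase univ g (mem_univ i0)).symm
  rw [Finset.erase_eq] at h2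
  omega

lemma mono_update (i0 : Fin k) (g : Fin k → ℕ) :
    mono S (Function.update g i0 (g i0 + 1)) = mulCoord S i0 (mono S g) := by
  classical
  funext z
  show ∏ i, (z : Fin k → ZMod p) i ^ (Function.update g i0 (g i0 + 1)) i
      = (z : Fin k → ZMod p) i0 * ∏ i, (z : Fin k → ZMod p) i ^ g i
  calc ∏ i, (z : Fin k → ZMod p) i ^ (Function.update g i0 (g i0 + 1)) i
      = ∏ i, Function.update (fun j => (z : Fin k → ZMod p) j ^ g j) i0
          ((z : Fin k → ZMod p) i0 ^ (g i0 + 1)) i :=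
        Finset.prod_congr rfl fun i _ =>
          Function.apply_update (fun j e => (z : Fin k → ZMod p) j ^ e) g i0 (g i0 + 1) i
    _ = (z : Fin k → ZMod p) i0 ^ (g i0 + 1)
          * ∏ i ∈ univ \ {i0}, (z : Fin k → ZMod p) i ^ g i :=
        Finset.prod_update_of_mem (mem_univ i0) _ _
    _ = (z : Fin k → ZMod p) i0 *
          ((z : Fin k → ZMod p) i0 ^ g i0 * ∏ i ∈ univ \ {i0}, (z : Fin k → ZMod p) i ^ g i) := by
        rw [pow_succ]; ring
    _ = (z : Fin k → ZMod p) i0 * ∏ i, (z : Fin k → ZMod p) i ^ g i := by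
        rw [← Finset.erase_eq, Finset.mul_prod_erase univ (fun i => (z : Fin k → ZMod p) i ^ g i) (mem_univ i0)]

lemma mulCoord_G {t} (i0 : Fin k) : G S t ≤ (G S (t + 1)).comap (mulCoord S i0) := by
  rw [G, Submodule.span_le]
  rintro v ⟨b, hb, rfl⟩
  simp only [SetLike.mem_coe, Submodule.mem_comap]
  rw [← mono_update]
  apply mono_mem
  have := sum_update b i0 (b i0 + 1)
  omega

lemma G_step {t} (h : G S (t + 1) ≤ G S t) : G S (t + 2) ≤ G S (t + 1) := by
  rw [show G S (t+2) = Submodule.span (ZMod p)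
    {v | ∃ b : Fin k → ℕ, (∑ i, b i) ≤ t + 2 ∧ v = mono S b} from rfl, Submodule.span_le]
  rintro v ⟨b, hb, rfl⟩
  rcases le_or_gt (∑ i, b i) (t + 1) with h1 | h1
  · exact mono_mem S h1
  · have hex : ∃ i, b i ≠ 0 := by
      by_contra hall
      push_neg at hall
      rw [Finset.sum_eq_zero (fun i _ => hall i)] at h1
      omega
    obtain ⟨i0, hi0⟩ := hex
    classical
    set b' := Function.update b i0 (b i0 - 1) with hb'
    have hbb : Function.update b' i0 (b' i0 + 1) = b := by
      funext i
      by_cases hi : i = i0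
      · subst hi; simp only [hb', Function.update_self]; omega
      · simp only [hb', Function.update_of_ne hi]
    have hsum' : ∑ i, b' i ≤ t + 1 := by
      have hsu := sum_update b i0 (b i0 - 1)
      rw [← hb'] at hsu
      have hb0 : b' i0 = b i0 - 1 := by simp [hb', Function.update_self]
      omega
    have hmem : mono S b' ∈ G S t := h (mono_mem S hsum')
    have h2 := mulCoord_G S i0 hmem
    rw [Submodule.mem_comap, ← mono_update, hbb] at h2
    exact h2

lemma restrict_eval_mem (Q : MvPolynomial (Fin k) (ZMod p)) (t : ℕ) (hQ : Q.totalDegree ≤ t) :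
    (fun z : {x // x ∈ S} => eval (z : Fin k → ZMod p) Q) ∈ G S t := by
  classical
  have hfun : (fun z : {x // x ∈ S} => eval (z : Fin k → ZMod p) Q)
      = ∑ a ∈ Q.support, Q.coeff a • mono S ⇑a := by
    funext z
    rw [eval_eq', Finset.sum_apply]
    rfl
  rw [hfun]
  refine Submodule.sum_mem _ fun a ha => Submodule.smul_mem _ _ (mono_mem S ?_)
  have h1 : (a.sum fun _ e => e) = ∑ i, a i := Finsupp.sum_fintype _ _ fun _ => rfl
  have h2 := MvPolynomial.le_totalDegree ha
  omega

lemma G_top : (⊤ : Submodule (ZMod p) ({x // x ∈ S} → ZMod p)) ≤ G S (k * (p - 1)) := by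
  intro v _
  classical
  have hv : v = ∑ z : {x // x ∈ S}, v z •
      (fun w : {x // x ∈ S} => eval (w : Fin k → ZMod p) (indicator (z : Fin k → ZMod p))) := by
    funext w
    rw [Finset.sum_apply]
    rw [Finset.sum_eq_single w ?_ ?_]
    · simp [eval_indicator_apply_eq_one]
    · intro z _ hz
      have hne : (w : Fin k → ZMod p) ≠ (z : Fin k → ZMod p) := fun hh => hz (Subtype.ext hh).symm
      simp [eval_indicator_apply_eq_zero _ _ hne]
    · intro hw; exact absurd (mem_univ w) hw
  rw [hv]
  exact Submodule.sum_mem _ fun z _ => Submodule.smul_mem _ _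
    (restrict_eval_mem S _ _ (totalDegree_indicator _))

lemma finrank_G_le (t : ℕ) : Module.finrank (ZMod p) (G S t) ≤ (t + k).choose k := by
  classical
  have hset : {v | ∃ b : Fin k → ℕ, (∑ i, b i) ≤ t ∧ v = mono S b}
      = ↑((expFinset k t).image (mono S)) := by
    ext v
    simp only [Set.mem_setOf_eq, Finset.coe_image, Set.mem_image, Finset.mem_coe, mem_expFinset]
    constructor
    · rintro ⟨b, hb, rfl⟩; exact ⟨b, hb, rfl⟩
    · rintro ⟨b, hb, rfl⟩; exact ⟨b, hb, rfl⟩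
  rw [G, hset]
  exact le_trans (finrank_span_finset_le_card _)
    (le_trans Finset.card_image_le (card_expFinset k t))

lemma G_not_le (d : ℕ) (hk : d + 1 ≤ k) (hS : (d + k + 1).choose k + 1 ≤ S.card) :
    ¬ (G S (d + 1) ≤ G S d) := by
  intro hle
  have hstep : ∀ j : ℕ, G S (d + j + 1) ≤ G S (d + j) := by
    intro j
    induction j with
    | zero => exact hle
    | succ n ih => exact G_step S ih
  have hladder : ∀ j : ℕ, G S (d + j) ≤ G S d := by
    intro j
    induction j with
    | zero => exact le_refl _
    | succ n ih => exact le_trans (hstep n) ih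
  have hdk : d ≤ k * (p - 1) := by
    have h2 : 1 ≤ p - 1 := pm1_pos
    have : k ≤ k * (p - 1) := Nat.le_mul_of_pos_right k (by omega)
    omega
  have htop : (⊤ : Submodule (ZMod p) ({x // x ∈ S} → ZMod p)) ≤ G S d := by
    refine le_trans (G_top S) ?_
    have heq : k * (p - 1) = d + (k * (p - 1) - d) := by omega
    rw [heq]
    exact hladder _
  have hcard : S.card ≤ (d + k).choose k := by
    have h1 : Module.finrank (ZMod p) ({x // x ∈ S} → ZMod p) = S.card := by
      rw [Module.finrank_fintype_fun_eq_card, Fintype.card_coe]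
    calc S.card = Module.finrank (ZMod p)
          (⊤ : Submodule (ZMod p) ({x // x ∈ S} → ZMod p)) := by rw [finrank_top, h1]
      _ ≤ Module.finrank (ZMod p) (G S d) := Submodule.finrank_mono htop
      _ ≤ (d + k).choose k := finrank_G_le S d
  have := Nat.choose_le_choose k (show d + k ≤ d + k + 1 by omega)
  omega

end Span




section Perp
variable (S : Finset (Fin k → ZMod p))

lemma exists_perp (d : ℕ) (hk : d + 1 ≤ k) (hS : (d + k + 1).choose k + 1 ≤ S.card) :
    ∃ h : {x // x ∈ S} → ZMod p,
      (∀ g ∈ G S d, ∑ z, g z * h z = 0) ∧ ∃ g ∈ G S (d + 1), ∑ z, g z * h z ≠ 0 := by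
  classical
  have hne := G_not_le S d hk hS
  set bb := Pi.basisFun (ZMod p) {x // x ∈ S} with hbb
  have hD : ∀ v w : {x // x ∈ S} → ZMod p, bb.toDual v w = ∑ z, w z * v z := by
    intro v w
    conv_lhs => rw [← bb.sum_repr w]
    rw [map_sum]
    refine Finset.sum_congr rfl fun z _ => ?_
    rw [map_smul, Module.Basis.toDual_apply_left, Pi.basisFun_repr, Pi.basisFun_repr, smul_eq_mul]
  have hanti : (G S (d+1)).dualAnnihilator ≤ (G S d).dualAnnihilator := by
    intro φ hφ
    rw [Submodule.mem_dualAnnihilator] at *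
    exact fun w hw => hφ w (G_le S (by omega) hw)
  have hne' : ¬ ((G S d).dualAnnihilator ≤ (G S (d+1)).dualAnnihilator) := by
    intro hle2
    apply hne
    have heqann : (G S d).dualAnnihilator = (G S (d+1)).dualAnnihilator :=
      le_antisymm hle2 hanti
    have h3 := congrArg Submodule.dualCoannihilator heqann
    rw [Subspace.dualAnnihilator_dualCoannihilator_eq,
      Subspace.dualAnnihilator_dualCoannihilator_eq] at h3
    rw [h3]
  obtain ⟨φ, hφd, hφd1⟩ := SetLike.not_le_iff_exists.1 hne'
  have hval : ∀ g, bb.toDual (bb.toDualEquiv.symm φ) g = φ g := by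
    intro g
    rw [← Module.Basis.toDualEquiv_apply, LinearEquiv.apply_symm_apply]
  refine ⟨bb.toDualEquiv.symm φ, ?_, ?_⟩
  · intro g hg
    rw [← hD, hval]
    exact (Submodule.mem_dualAnnihilator φ).1 hφd g hg
  · rw [Submodule.mem_dualAnnihilator] at hφd1
    push_neg at hφd1
    obtain ⟨g, hg, hgne⟩ := hφd1
    refine ⟨g, hg, ?_⟩
    rw [← hD, hval]
    exact hgne

lemma exists_good (d : ℕ) (hk : d + 1 ≤ k) (hS : (d + k + 1).choose k + 1 ≤ S.card) :
    ∃ h : {x // x ∈ S} → ZMod p,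
      (∀ b : Fin k → ℕ, (∑ i, b i) ≤ d → ∑ z, mono S b z * h z = 0) ∧
      ∃ b : Fin k → ℕ, (∑ i, b i) ≤ d + 1 ∧ ∑ z, mono S b z * h z ≠ 0 := by
  obtain ⟨h, h1, g, hg, hgne⟩ := exists_perp S d hk hS
  refine ⟨h, fun b hb => h1 _ (mono_mem S hb), ?_⟩
  by_contra hall
  push_neg at hall
  apply hgne
  set L : ({x // x ∈ S} → ZMod p) →ₗ[ZMod p] ZMod p :=
    { toFun := fun g => ∑ z, g z * h z
      map_add' := by intro u v; simp [add_mul, Finset.sum_add_distrib]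
      map_smul' := by
        intro c v
        simp only [Pi.smul_apply, smul_eq_mul, RingHom.id_apply, Finset.mul_sum]
        exact Finset.sum_congr rfl fun z _ => by ring } with hL
  have hker : G S (d+1) ≤ LinearMap.ker L := by
    rw [G, Submodule.span_le]
    rintro v ⟨b, hb, rfl⟩
    simp only [SetLike.mem_coe, LinearMap.mem_ker]
    exact hall b hb
  exact hker hg

end Perp

section Rexp

lemma pow_mod_aux (x : ZMod p) (a : ℕ) (hx : x ≠ 0) : x ^ a = x ^ (a % (p - 1)) := by
  conv_lhs => rw [← Nat.div_add_mod a (p - 1)]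
  rw [pow_add, pow_mul, ZMod.pow_card_sub_one_eq_one hx, one_pow, one_mul]

def rexp (p : ℕ) (b : Fin k → ℕ) : Fin k → ℕ :=
  fun i => if b i = 0 then 0 else (b i - 1) % (p - 1) + 1

lemma rexp_le (b : Fin k → ℕ) (i : Fin k) : rexp p b i ≤ p - 1 := by
  have h1 : 0 < p - 1 := pm1_pos
  rw [rexp]
  split
  · omega
  · have := Nat.mod_lt (b i - 1) h1
    omega

lemma rexp_le_self (b : Fin k → ℕ) (i : Fin k) : rexp p b i ≤ b i := by
  rw [rexp]
  split
  · omega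
  · have := Nat.mod_le (b i - 1) (p - 1)
    omega

lemma pow_rexp (x : ZMod p) (b : Fin k → ℕ) (i : Fin k) : x ^ (rexp p b i) = x ^ b i := by
  rw [rexp]
  split_ifs with h
  · rw [h]
  · rcases eq_or_ne x 0 with rfl | hx
    · rw [zero_pow (by omega), zero_pow h]
    · rw [pow_mod_aux x _ hx, pow_mod_aux x (b i) hx]
      congr 1
      have h1 : (b i - 1) % (p-1) ≡ b i - 1 [MOD p - 1] := Nat.mod_modEq _ _
      have h2 := h1.add_right 1
      have h3 : b i - 1 + 1 = b i := by omega
      rw [h3] at h2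
      exact h2
end Rexp

end DualAux

/-- **Existence of a dual function of exact degree supported on a given set.**
For a prime `p`, `d ≥ 0` and `k ≥ d + 1`, every `S ⊆ F_p^k` with
`|S| ≥ C(d+k+1, k) + 1` contains the support of some `h : F_p^k → F_p` whose reduced
polynomial has total degree exactly `k(p-1) - (d+1)`. -/
theorem exists_exact_degree_supported (p : ℕ) [Fact p.Prime] (d k : ℕ) (hk : d + 1 ≤ k)
    (S : Finset (Fin k → ZMod p)) (hS : (d + k + 1).choose k + 1 ≤ S.card) :
    ∃ h : (Fin k → ZMod p) → ZMod p, (∀ x, h x ≠ 0 → x ∈ S) ∧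
      ∃ P : MvPolynomial (Fin k) (ZMod p), IsReducedPolyOf p P h ∧ P ≠ 0 ∧
        P.totalDegree = k * (p - 1) - (d + 1) := by
  classical
  obtain ⟨h0, hvan, b0, hb0sum, hb0ne⟩ := DualAux.exists_good S d hk hS
  set H : (Fin k → ZMod p) → ZMod p := fun x => if hx : x ∈ S then h0 ⟨x, hx⟩ else 0 with hH
  have hHS : ∀ x, H x ≠ 0 → x ∈ S := by
    intro x hx
    by_contra hxS
    exact hx (by rw [hH]; exact dif_neg hxS)
  have hmomH : ∀ b : Fin k → ℕ,
      (∑ x : Fin k → ZMod p, H x * ∏ i, x i ^ b i)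
        = ∑ z : {x // x ∈ S}, DualAux.mono S b z * h0 z := by
    intro b
    rw [← Finset.sum_subset (Finset.subset_univ S)
      (fun x _ hx => by rw [hH]; simp only [dif_neg hx, zero_mul])]
    rw [← Finset.sum_coe_sort S (fun x => H x * ∏ i, x i ^ b i)]
    refine Finset.sum_congr rfl fun z _ => ?_
    have hz : H (z : Fin k → ZMod p) = h0 z := by
      rw [hH]
      simp only [dif_pos z.2, Subtype.coe_eta]
    have hm : DualAux.mono S b z = ∏ i, (z : Fin k → ZMod p) i ^ b i := rfl
    rw [hz, hm]
    ring
  have heval : ∀ x, MvPolynomial.eval x (DualAux.polyOf H) = H x := DualAux.eval_polyOf H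
  have hmom : ∀ b : Fin k → ℕ, (∑ i, b i) ≤ d →
      ∑ x : Fin k → ZMod p, MvPolynomial.eval x (DualAux.polyOf H) * ∏ i, x i ^ b i = 0 := by
    intro b hb
    calc ∑ x : Fin k → ZMod p, MvPolynomial.eval x (DualAux.polyOf H) * ∏ i, x i ^ b i
        = ∑ x : Fin k → ZMod p, H x * ∏ i, x i ^ b i :=
          Finset.sum_congr rfl fun x _ => by rw [heval]
      _ = ∑ z : {x // x ∈ S}, DualAux.mono S b z * h0 z := hmomH b
      _ = 0 := hvan b hb
  set b1 := DualAux.rexp p b0 with hb1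
  have hmono1 : DualAux.mono S b1 = DualAux.mono S b0 := by
    funext z
    exact Finset.prod_congr rfl fun i _ => DualAux.pow_rexp _ b0 i
  have hb1ne : ∑ z : {x // x ∈ S}, DualAux.mono S b1 z * h0 z ≠ 0 := by
    rw [hmono1]; exact hb0ne
  have hb1sum_le : ∑ i, b1 i ≤ d + 1 :=
    le_trans (Finset.sum_le_sum fun i _ => DualAux.rexp_le_self b0 i) hb0sum
  have hb1sum : ∑ i, b1 i = d + 1 := by
    rcases Nat.lt_or_ge (∑ i, b1 i) (d + 1) with hlt | hge
    · exact absurd (by rw [← hmomH b1] at hb1ne ⊢; exact (by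
        calc ∑ x : Fin k → ZMod p, H x * ∏ i, x i ^ b1 i
            = ∑ x : Fin k → ZMod p, MvPolynomial.eval x (DualAux.polyOf H) * ∏ i, x i ^ b1 i :=
              Finset.sum_congr rfl fun x _ => by rw [heval]
          _ = 0 := hmom b1 (by omega))) hb1ne
    · omega
  have hne1 : ∑ x : Fin k → ZMod p,
      MvPolynomial.eval x (DualAux.polyOf H) * ∏ i, x i ^ b1 i ≠ 0 := by
    have heq2 : ∑ x : Fin k → ZMod p, MvPolynomial.eval x (DualAux.polyOf H) * ∏ i, x i ^ b1 i
        = ∑ z : {x // x ∈ S}, DualAux.mono S b1 z * h0 z := by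
      rw [← hmomH b1]
      exact Finset.sum_congr rfl fun x _ => by rw [heval]
    rw [heq2]
    exact hb1ne
  obtain ⟨hP0, hPdeg⟩ := DualAux.totalDegree_exact (DualAux.polyOf H) (DualAux.polyOf_cap H) d
    hmom b1 (fun i => DualAux.rexp_le b0 i) hb1sum hne1
  exact ⟨H, hHS, DualAux.polyOf H, ⟨DualAux.polyOf_degreeOf H, heval⟩, hP0, hPdeg⟩
end

section
/- Let q be a prime power and let k ≤ n be positive integers. Let h : F_q^k → F_q be a function that is not identically zero, set Q := |supp(h)|, and let f : F_q^n → F_q. Let δ := min_{g ∈ F_n(h)} Pr_{x uniform in F_q^n}[f(x) ≠ g(x)]. Then, for T chosen uniformly at random among all affine maps F_q^n → F_q^k, the probability that ⟨f∘T, h⟩ ≠ 0 is at least δ/(4Q²). -/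
open Finset
set_option linter.unusedSectionVars false

section KS
variable {F : Type} [Field F] [Fintype F] [DecidableEq F] {k n : ℕ}

/-- generic fiber-count transfer lemma -/
lemma fiber_transfer {Ω A : Type} [Fintype Ω] [Fintype A] [DecidableEq A]
    (ψ : Ω → A) (e m : ℕ)
    (hd : ∀ a : A, e * (univ.filter fun ω => ψ ω = a).card = m)
    (P : A → Prop) [DecidablePred P] [DecidableEq Ω] :
    e * (univ.filter fun ω => P (ψ ω)).card = m * (univ.filter P).card := by
  have h1 : (univ.filter fun ω => P (ψ ω)).card
      = ∑ a ∈ univ.filter P, ((univ.filter fun ω => P (ψ ω)).filter fun ω => ψ ω = a).card := by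
    apply Finset.card_eq_sum_card_fiberwise
    intro x hx
    simp only [mem_coe, mem_filter, mem_univ, true_and] at hx ⊢
    exact hx
  have h2 : ∀ a ∈ univ.filter P,
      ((univ.filter fun ω => P (ψ ω)).filter fun ω => ψ ω = a).card
      = (univ.filter fun ω => ψ ω = a).card := by
    intro a ha
    congr 1
    ext ω
    simp only [mem_filter, mem_univ, true_and] at ha ⊢
    constructor
    · rintro ⟨_, hh⟩; exact hh
    · intro hh; exact ⟨hh ▸ ha, hh⟩
  rw [h1, Finset.sum_congr rfl h2, Finset.mul_sum]
  simp only [hd]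
  rw [Finset.sum_const, smul_eq_mul, mul_comm]

/-- fibers of `w ↦ ∑ j, v j • w j` all have the same size `card G ^ k / card G`. -/
lemma smul_fiber_card {G : Type} [AddCommGroup G] [Module F G] [Fintype G] [DecidableEq G]
    {v : Fin k → F} (hv : v ≠ 0) (C : G) :
    Fintype.card G * (univ.filter fun w : Fin k → G => ∑ j, v j • w j = C).card
      = Fintype.card G ^ k := by
  obtain ⟨j₀, hj₀⟩ : ∃ j, v j ≠ 0 := by
    by_contra hc; push_neg at hc; exact hv (funext hc)
  have single_sum : ∀ d : G, ∑ j, v j • (Pi.single j₀ d : Fin k → G) j = v j₀ • d := by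
    intro d
    have : ∀ j : Fin k, v j • (Pi.single j₀ d : Fin k → G) j = if j = j₀ then v j₀ • d else 0 := by
      intro j
      by_cases hj : j = j₀
      · subst hj; simp
      · simp [Pi.single_apply, hj]
    rw [Finset.sum_congr rfl (fun j _ => this j)]
    simp
  have key : ∀ C' : G, (univ.filter fun w : Fin k → G => ∑ j, v j • w j = C').card
      = (univ.filter fun w : Fin k → G => ∑ j, v j • w j = C).card := by
    intro C'
    apply Finset.card_bij (fun w _ => w + Pi.single j₀ ((v j₀)⁻¹ • (C - C')))
    · intro w hw
      simp only [mem_filter, mem_univ, true_and] at hw ⊢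
      simp only [Pi.add_apply, smul_add, Finset.sum_add_distrib, hw, single_sum,
        smul_smul, mul_inv_cancel₀ hj₀, one_smul]
      abel
    · intro w₁ h₁ w₂ h₂ he
      exact add_right_cancel he
    · intro w hw
      simp only [mem_filter, mem_univ, true_and] at hw
      refine ⟨w - Pi.single j₀ ((v j₀)⁻¹ • (C - C')), ?_, by abel⟩
      simp only [mem_filter, mem_univ, true_and, Pi.sub_apply, smul_sub,
        Finset.sum_sub_distrib, hw, single_sum, smul_smul, mul_inv_cancel₀ hj₀, one_smul]
      abel
  have total : ∑ C' : G, (univ.filter fun w : Fin k → G => ∑ j, v j • w j = C').card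
      = Fintype.card G ^ k := by
    rw [← Finset.card_eq_sum_card_fiberwise (f := fun w : Fin k → G => ∑ j, v j • w j)
      (s := univ) (t := univ) (fun x _ => mem_univ _)]
    simp [Fintype.card_fun]
  calc Fintype.card G * (univ.filter fun w : Fin k → G => ∑ j, v j • w j = C).card
      = ∑ _C' : G, (univ.filter fun w : Fin k → G => ∑ j, v j • w j = C).card := by
        rw [Finset.sum_const]; simp [mul_comm]
    _ = ∑ C' : G, (univ.filter fun w : Fin k → G => ∑ j, v j • w j = C').card := by
        exact Finset.sum_congr rfl fun C' _ => (key C').symm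
    _ = Fintype.card G ^ k := total


-- part 2
variable {F : Type} [Field F] [Fintype F] [DecidableEq F] {k n : ℕ}

def matCols : Matrix (Fin n) (Fin k) F ≃ (Fin k → Fin n → F) where
  toFun M := fun j i => M i j
  invFun w := fun i j => w j i
  left_inv _ := rfl
  right_inv _ := rfl

lemma card_mat : Fintype.card (Matrix (Fin n) (Fin k) F) = Fintype.card (Fin n → F) ^ k := by
  rw [Fintype.card_congr (matCols (F := F) (k := k) (n := n)), Fintype.card_fun, Fintype.card_fin]

lemma mat_fiber {u : Fin k → F} (hu : u ≠ 0) (t : Fin n → F) :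
    Fintype.card (Fin n → F) *
      (univ.filter fun M : Matrix (Fin n) (Fin k) F => M.mulVec u = t).card
      = Fintype.card (Matrix (Fin n) (Fin k) F) := by
  have e : (univ.filter fun M : Matrix (Fin n) (Fin k) F => M.mulVec u = t).card
      = (univ.filter fun w : Fin k → (Fin n → F) => ∑ j, u j • w j = t).card := by
    apply Finset.card_bij (fun M _ => matCols M)
    · intro M hM
      simp only [mem_filter, mem_univ, true_and] at hM ⊢
      rw [← hM]
      funext i
      simp only [Finset.sum_apply, Pi.smul_apply, smul_eq_mul, Matrix.mulVec, dotProduct,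
        matCols]
      exact Finset.sum_congr rfl fun j _ => mul_comm _ _
    · intro a ha b hb hab
      exact matCols.injective hab
    · intro w hw
      exact ⟨matCols.symm w, by
        simp only [mem_filter, mem_univ, true_and] at hw ⊢
        rw [← hw]
        funext i
        simp only [Finset.sum_apply, Pi.smul_apply, smul_eq_mul, Matrix.mulVec, dotProduct,
          matCols]
        exact Finset.sum_congr rfl fun j _ => mul_comm _ _, by simp⟩
  rw [e, card_mat]
  exact smul_fiber_card (F := F) hu t

variable (h : (Fin k → F) → F) (f : (Fin n → F) → F)

def tval (M : Matrix (Fin n) (Fin k) F) (b : Fin n → F) : F :=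
  ∑ α : Fin k → F, f (M.mulVec α + b) * h α

variable (β : Fin k → F)

def svote (x : Fin n → F) (M : Matrix (Fin n) (Fin k) F) : F :=
  ∑ γ ∈ univ.erase β, f (M.mulVec (γ - β) + x) * h γ

def vote (x : Fin n → F) (M : Matrix (Fin n) (Fin k) F) : F :=
  -(h β)⁻¹ * svote h f β x M

lemma tval_split (M : Matrix (Fin n) (Fin k) F) (b : Fin n → F) :
    tval h f M b = f (M.mulVec β + b) * h β + svote h f β (M.mulVec β + b) M := by
  have key : ∀ α : Fin k → F, M.mulVec α + b = M.mulVec (α - β) + (M.mulVec β + b) := by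
    intro α
    rw [Matrix.mulVec_sub]
    abel
  rw [tval, Finset.sum_congr rfl fun α _ => by rw [key α]]
  rw [← Finset.add_sum_erase _ _ (mem_univ β)]
  rw [sub_self, Matrix.mulVec_zero, zero_add]
  rfl

lemma rej_iff (hβ : h β ≠ 0) (M : Matrix (Fin n) (Fin k) F) (b : Fin n → F) :
    tval h f M b ≠ 0 ↔ f (M.mulVec β + b) ≠ vote h f β (M.mulVec β + b) M := by
  rw [tval_split h f β M b]
  set x := M.mulVec β + b
  have : f x * h β + svote h f β x M = h β * (f x - vote h f β x M) := by
    rw [vote]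
    field_simp
    ring
  rw [this]
  constructor
  · intro hne heq
    exact hne (by rw [heq, sub_self, mul_zero])
  · intro hne
    exact mul_ne_zero hβ (sub_ne_zero_of_ne hne)

end KS

section KS3
variable {F : Type} [Field F] [Fintype F] [DecidableEq F] {k n : ℕ}
variable (h : (Fin k → F) → F) (f : (Fin n → F) → F) (β : Fin k → F)

def rejC : ℕ :=
  (univ.filter fun Mb : Matrix (Fin n) (Fin k) F × (Fin n → F) =>
    tval h f Mb.1 Mb.2 ≠ 0).card

lemma row_count (x : Fin n → F) {α : Fin k → F} (hα : α ≠ β) :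
    Fintype.card (Fin n → F) *
      (univ.filter fun p : Matrix (Fin n) (Fin k) F × Matrix (Fin n) (Fin k) F =>
        tval h f p.2 (x - p.2.mulVec β + p.1.mulVec (α - β)) ≠ 0).card
    = Fintype.card (Matrix (Fin n) (Fin k) F) * rejC h f := by
  classical
  have := fiber_transfer
    (ψ := fun p : Matrix (Fin n) (Fin k) F × Matrix (Fin n) (Fin k) F =>
      (p.2, x - p.2.mulVec β + p.1.mulVec (α - β)))
    (e := Fintype.card (Fin n → F)) (m := Fintype.card (Matrix (Fin n) (Fin k) F))
    (P := fun Mb : Matrix (Fin n) (Fin k) F × (Fin n → F) => tval h f Mb.1 Mb.2 ≠ 0)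
    ?_
  · exact this
  · rintro ⟨M, b⟩
    have hcb : (univ.filter fun p : Matrix (Fin n) (Fin k) F × Matrix (Fin n) (Fin k) F =>
        (p.2, x - p.2.mulVec β + p.1.mulVec (α - β)) = (M, b)).card
        = (univ.filter fun M₁ : Matrix (Fin n) (Fin k) F =>
            M₁.mulVec (α - β) = b - x + M.mulVec β).card := by
      symm
      apply Finset.card_bij (fun M₁ _ => (M₁, M))
      · intro M₁ hM₁
        simp only [mem_filter, mem_univ, true_and] at hM₁ ⊢
        rw [hM₁, Prod.mk.injEq]
        exact ⟨rfl, by abel⟩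
      · intro a _ b _ hab
        simpa using (Prod.mk.injEq _ _ _ _ ▸ hab).1
      · rintro ⟨M₁, M₂⟩ hp
        simp only [mem_filter, mem_univ, true_and, Prod.mk.injEq] at hp
        obtain ⟨h2, h1⟩ := hp
        refine ⟨M₁, ?_, by rw [h2]⟩
        simp only [mem_filter, mem_univ, true_and]
        subst h2
        rw [← h1]; abel
    rw [hcb]
    exact mat_fiber (sub_ne_zero_of_ne hα) _


lemma col_count (x : Fin n → F) {γ : Fin k → F} (hγ : γ ≠ β) :
    Fintype.card (Fin n → F) *
      (univ.filter fun p : Matrix (Fin n) (Fin k) F × Matrix (Fin n) (Fin k) F =>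
        tval h f p.1 (x - p.1.mulVec β + p.2.mulVec (γ - β)) ≠ 0).card
    = Fintype.card (Matrix (Fin n) (Fin k) F) * rejC h f := by
  classical
  have := fiber_transfer
    (ψ := fun p : Matrix (Fin n) (Fin k) F × Matrix (Fin n) (Fin k) F =>
      (p.1, x - p.1.mulVec β + p.2.mulVec (γ - β)))
    (e := Fintype.card (Fin n → F)) (m := Fintype.card (Matrix (Fin n) (Fin k) F))
    (P := fun Mb : Matrix (Fin n) (Fin k) F × (Fin n → F) => tval h f Mb.1 Mb.2 ≠ 0)
    ?_
  · exact this
  · rintro ⟨M, b⟩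
    have hcb : (univ.filter fun p : Matrix (Fin n) (Fin k) F × Matrix (Fin n) (Fin k) F =>
        (p.1, x - p.1.mulVec β + p.2.mulVec (γ - β)) = (M, b)).card
        = (univ.filter fun M₂ : Matrix (Fin n) (Fin k) F =>
            M₂.mulVec (γ - β) = b - x + M.mulVec β).card := by
      symm
      apply Finset.card_bij (fun M₂ _ => (M, M₂))
      · intro M₂ hM₂
        simp only [mem_filter, mem_univ, true_and] at hM₂ ⊢
        rw [hM₂, Prod.mk.injEq]
        exact ⟨rfl, by abel⟩
      · intro a _ b _ hab
        simpa using (Prod.mk.injEq _ _ _ _ ▸ hab).2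
      · rintro ⟨M₁, M₂⟩ hp
        simp only [mem_filter, mem_univ, true_and, Prod.mk.injEq] at hp
        obtain ⟨h2, h1⟩ := hp
        refine ⟨M₂, ?_, by rw [h2]⟩
        simp only [mem_filter, mem_univ, true_and]
        subst h2
        rw [← h1]; abel
    rw [hcb]
    exact mat_fiber (sub_ne_zero_of_ne hγ) _

lemma collision_count (x : Fin n → F) :
    (univ.filter fun p : Matrix (Fin n) (Fin k) F × Matrix (Fin n) (Fin k) F =>
      vote h f β x p.1 = vote h f β x p.2).card
    = ∑ a : F, ((univ.filter fun M : Matrix (Fin n) (Fin k) F => vote h f β x M = a).card) ^ 2 := by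
  classical
  rw [Finset.card_eq_sum_card_fiberwise
    (f := fun p : Matrix (Fin n) (Fin k) F × Matrix (Fin n) (Fin k) F => vote h f β x p.1)
    (t := univ) (fun p _ => mem_univ _)]
  apply Finset.sum_congr rfl
  intro a _
  have : ((univ.filter fun p : Matrix (Fin n) (Fin k) F × Matrix (Fin n) (Fin k) F =>
      vote h f β x p.1 = vote h f β x p.2).filter fun p => vote h f β x p.1 = a)
      = (univ.filter fun M : Matrix (Fin n) (Fin k) F => vote h f β x M = a) ×ˢ
        (univ.filter fun M : Matrix (Fin n) (Fin k) F => vote h f β x M = a) := by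
    ext p
    simp only [Finset.mem_filter, Finset.mem_product, mem_univ, true_and]
    constructor
    · rintro ⟨hh, ha⟩; exact ⟨ha, hh ▸ ha⟩
    · rintro ⟨h1, h2⟩; exact ⟨h1.trans h2.symm, h1⟩
  rw [this, Finset.card_product, sq]

lemma vote_agree (hβ : h β ≠ 0) (x : Fin n → F) (M₁ M₂ : Matrix (Fin n) (Fin k) F)
    (hrow : ∀ α, α ≠ β → h α ≠ 0 → tval h f M₂ (x - M₂.mulVec β + M₁.mulVec (α - β)) = 0)
    (hcol : ∀ γ, γ ≠ β → h γ ≠ 0 → tval h f M₁ (x - M₁.mulVec β + M₂.mulVec (γ - β)) = 0) :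
    vote h f β x M₁ = vote h f β x M₂ := by
  have row' : ∀ α ∈ univ.erase β,
      h β * (f (M₁.mulVec (α - β) + x) * h α)
      = -∑ γ ∈ univ.erase β,
          f (M₂.mulVec (γ - β) + (x + M₁.mulVec (α - β))) * h γ * h α := by
    intro α hα
    rw [mem_erase] at hα
    by_cases hα0 : h α = 0
    · simp [hα0]
    · have h0 := hrow α hα.1 hα0
      rw [tval_split h f β] at h0
      have hpt : M₂.mulVec β + (x - M₂.mulVec β + M₁.mulVec (α - β))
          = x + M₁.mulVec (α - β) := by abel
      rw [hpt] at h0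
      have hf : f (x + M₁.mulVec (α - β)) * h β
          = -svote h f β (x + M₁.mulVec (α - β)) M₂ := by
        linear_combination h0
      have hpt2 : M₁.mulVec (α - β) + x = x + M₁.mulVec (α - β) := by abel
      rw [hpt2]
      calc h β * (f (x + M₁.mulVec (α - β)) * h α)
          = (f (x + M₁.mulVec (α - β)) * h β) * h α := by ring
        _ = -svote h f β (x + M₁.mulVec (α - β)) M₂ * h α := by rw [hf]
        _ = -∑ γ ∈ univ.erase β,
              f (M₂.mulVec (γ - β) + (x + M₁.mulVec (α - β))) * h γ * h α := by
            rw [svote, neg_mul, Finset.sum_mul]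
  have col' : ∀ γ ∈ univ.erase β,
      h β * (f (M₂.mulVec (γ - β) + x) * h γ)
      = -∑ α ∈ univ.erase β,
          f (M₁.mulVec (α - β) + (x + M₂.mulVec (γ - β))) * h α * h γ := by
    intro γ hγ
    rw [mem_erase] at hγ
    by_cases hγ0 : h γ = 0
    · simp [hγ0]
    · have h0 := hcol γ hγ.1 hγ0
      rw [tval_split h f β] at h0
      have hpt : M₁.mulVec β + (x - M₁.mulVec β + M₂.mulVec (γ - β))
          = x + M₂.mulVec (γ - β) := by abel
      rw [hpt] at h0
      have hf : f (x + M₂.mulVec (γ - β)) * h β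
          = -svote h f β (x + M₂.mulVec (γ - β)) M₁ := by
        linear_combination h0
      have hpt2 : M₂.mulVec (γ - β) + x = x + M₂.mulVec (γ - β) := by abel
      rw [hpt2]
      calc h β * (f (x + M₂.mulVec (γ - β)) * h γ)
          = (f (x + M₂.mulVec (γ - β)) * h β) * h γ := by ring
        _ = -svote h f β (x + M₂.mulVec (γ - β)) M₁ * h γ := by rw [hf]
        _ = -∑ α ∈ univ.erase β,
              f (M₁.mulVec (α - β) + (x + M₂.mulVec (γ - β))) * h α * h γ := by
            rw [svote, neg_mul, Finset.sum_mul]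
  have key : h β * svote h f β x M₁ = h β * svote h f β x M₂ := by
    rw [svote, svote, Finset.mul_sum, Finset.mul_sum]
    rw [Finset.sum_congr rfl row', Finset.sum_congr rfl col']
    rw [Finset.sum_neg_distrib, Finset.sum_neg_distrib, neg_inj]
    rw [Finset.sum_comm]
    apply Finset.sum_congr rfl
    intro γ _
    apply Finset.sum_congr rfl
    intro α _
    have hpt : M₂.mulVec (γ - β) + (x + M₁.mulVec (α - β))
        = M₁.mulVec (α - β) + (x + M₂.mulVec (γ - β)) := by abel
    rw [hpt]; ring
  have hs : svote h f β x M₁ = svote h f β x M₂ := mul_left_cancel₀ hβ key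
  rw [vote, vote, hs]

lemma neq_bound (hβ : h β ≠ 0) (x : Fin n → F) :
    Fintype.card (Fin n → F) *
      (univ.filter fun p : Matrix (Fin n) (Fin k) F × Matrix (Fin n) (Fin k) F =>
        vote h f β x p.1 ≠ vote h f β x p.2).card
    ≤ 2 * (univ.filter fun y : Fin k → F => h y ≠ 0).card *
        (Fintype.card (Matrix (Fin n) (Fin k) F) * rejC h f) := by
  classical
  set supp := (univ.filter fun y : Fin k → F => h y ≠ 0) with hsupp
  set SE := supp.erase β with hSE
  have hsub : (univ.filter fun p : Matrix (Fin n) (Fin k) F × Matrix (Fin n) (Fin k) F =>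
        vote h f β x p.1 ≠ vote h f β x p.2)
      ⊆ (SE.biUnion fun α => univ.filter fun p : Matrix (Fin n) (Fin k) F × Matrix (Fin n) (Fin k) F =>
            tval h f p.2 (x - p.2.mulVec β + p.1.mulVec (α - β)) ≠ 0)
        ∪ (SE.biUnion fun γ => univ.filter fun p : Matrix (Fin n) (Fin k) F × Matrix (Fin n) (Fin k) F =>
            tval h f p.1 (x - p.1.mulVec β + p.2.mulVec (γ - β)) ≠ 0) := by
    intro p hp
    simp only [mem_filter, mem_univ, true_and] at hp
    by_contra hc
    simp only [Finset.mem_union, Finset.mem_biUnion, mem_filter, mem_univ, true_and,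
      not_or, not_exists, not_and, not_not] at hc
    apply hp
    apply vote_agree h f β hβ x p.1 p.2
    · intro α hα hα0
      exact hc.1 α (by rw [hSE, mem_erase, hsupp, mem_filter]; exact ⟨hα, mem_univ α, hα0⟩)
    · intro γ hγ hγ0
      exact hc.2 γ (by rw [hSE, mem_erase, hsupp, mem_filter]; exact ⟨hγ, mem_univ γ, hγ0⟩)
  have hcard := Finset.card_le_card hsub
  have hu := Finset.card_union_le
    (SE.biUnion fun α => univ.filter fun p : Matrix (Fin n) (Fin k) F × Matrix (Fin n) (Fin k) F =>
        tval h f p.2 (x - p.2.mulVec β + p.1.mulVec (α - β)) ≠ 0)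
    (SE.biUnion fun γ => univ.filter fun p : Matrix (Fin n) (Fin k) F × Matrix (Fin n) (Fin k) F =>
        tval h f p.1 (x - p.1.mulVec β + p.2.mulVec (γ - β)) ≠ 0)
  have hb1 := Finset.card_biUnion_le (s := SE)
    (t := fun α => univ.filter fun p : Matrix (Fin n) (Fin k) F × Matrix (Fin n) (Fin k) F =>
        tval h f p.2 (x - p.2.mulVec β + p.1.mulVec (α - β)) ≠ 0)
  have hb2 := Finset.card_biUnion_le (s := SE)
    (t := fun γ => univ.filter fun p : Matrix (Fin n) (Fin k) F × Matrix (Fin n) (Fin k) F =>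
        tval h f p.1 (x - p.1.mulVec β + p.2.mulVec (γ - β)) ≠ 0)
  have step : Fintype.card (Fin n → F) *
      (univ.filter fun p : Matrix (Fin n) (Fin k) F × Matrix (Fin n) (Fin k) F =>
        vote h f β x p.1 ≠ vote h f β x p.2).card
      ≤ ∑ α ∈ SE, Fintype.card (Fin n → F) * (univ.filter fun p : Matrix (Fin n) (Fin k) F × Matrix (Fin n) (Fin k) F =>
            tval h f p.2 (x - p.2.mulVec β + p.1.mulVec (α - β)) ≠ 0).card
        + ∑ γ ∈ SE, Fintype.card (Fin n → F) * (univ.filter fun p : Matrix (Fin n) (Fin k) F × Matrix (Fin n) (Fin k) F =>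
            tval h f p.1 (x - p.1.mulVec β + p.2.mulVec (γ - β)) ≠ 0).card := by
    rw [← Finset.mul_sum, ← Finset.mul_sum, ← Nat.mul_add]
    exact Nat.mul_le_mul_left _ (le_trans hcard (le_trans hu (Nat.add_le_add hb1 hb2)))
  have eq1 : ∀ α ∈ SE, Fintype.card (Fin n → F) * (univ.filter fun p : Matrix (Fin n) (Fin k) F × Matrix (Fin n) (Fin k) F =>
        tval h f p.2 (x - p.2.mulVec β + p.1.mulVec (α - β)) ≠ 0).card
      = Fintype.card (Matrix (Fin n) (Fin k) F) * rejC h f := by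
    intro α hα
    rw [hSE, mem_erase] at hα
    exact row_count h f β x hα.1
  have eq2 : ∀ γ ∈ SE, Fintype.card (Fin n → F) * (univ.filter fun p : Matrix (Fin n) (Fin k) F × Matrix (Fin n) (Fin k) F =>
        tval h f p.1 (x - p.1.mulVec β + p.2.mulVec (γ - β)) ≠ 0).card
      = Fintype.card (Matrix (Fin n) (Fin k) F) * rejC h f := by
    intro γ hγ
    rw [hSE, mem_erase] at hγ
    exact col_count h f β x hγ.1
  rw [Finset.sum_congr rfl eq1, Finset.sum_congr rfl eq2, Finset.sum_const] at step
  simp only [smul_eq_mul] at step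
  refine le_trans step ?_
  have hle : SE.card ≤ supp.card := Finset.card_erase_le
  nlinarith [Nat.zero_le (Fintype.card (Matrix (Fin n) (Fin k) F) * rejC h f)]

noncomputable def gfun (x : Fin n → F) : F :=
  (Finset.exists_max_image univ
    (fun a : F => (univ.filter fun M : Matrix (Fin n) (Fin k) F => vote h f β x M = a).card)
    ⟨0, mem_univ 0⟩).choose

lemma gfun_max (x : Fin n → F) (a : F) :
    (univ.filter fun M : Matrix (Fin n) (Fin k) F => vote h f β x M = a).card
    ≤ (univ.filter fun M : Matrix (Fin n) (Fin k) F => vote h f β x M = gfun h f β x).card :=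
  (Finset.exists_max_image univ
    (fun a : F => (univ.filter fun M : Matrix (Fin n) (Fin k) F => vote h f β x M = a).card)
    ⟨0, mem_univ 0⟩).choose_spec.2 a (mem_univ a)

lemma star (hβ : h β ≠ 0) (x : Fin n → F) :
    Fintype.card (Fin n → F) * Fintype.card (Matrix (Fin n) (Fin k) F)
    ≤ Fintype.card (Fin n → F) *
        (univ.filter fun M : Matrix (Fin n) (Fin k) F => vote h f β x M = gfun h f β x).card
      + 2 * (univ.filter fun y : Fin k → F => h y ≠ 0).card * rejC h f := by
  classical
  set cV := Fintype.card (Fin n → F)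
  set cM := Fintype.card (Matrix (Fin n) (Fin k) F) with hcM
  set Q := (univ.filter fun y : Fin k → F => h y ≠ 0).card
  set R := rejC h f
  set cnt := fun a : F => (univ.filter fun M : Matrix (Fin n) (Fin k) F => vote h f β x M = a).card with hcnt
  have hpart : (univ.filter fun p : Matrix (Fin n) (Fin k) F × Matrix (Fin n) (Fin k) F =>
        vote h f β x p.1 = vote h f β x p.2).card
      + (univ.filter fun p : Matrix (Fin n) (Fin k) F × Matrix (Fin n) (Fin k) F =>
        ¬ (vote h f β x p.1 = vote h f β x p.2)).card = cM * cM := by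
    rw [Finset.card_filter_add_card_filter_not]
    rw [Finset.card_univ, Fintype.card_prod]
  have hsum : ∑ a : F, cnt a = cM := by
    rw [hcM, ← Finset.card_univ]
    exact (Finset.card_eq_sum_card_fiberwise
      (f := fun M : Matrix (Fin n) (Fin k) F => vote h f β x M)
      (s := univ) (t := univ) (fun p _ => mem_univ _)).symm
  have hcoll : (univ.filter fun p : Matrix (Fin n) (Fin k) F × Matrix (Fin n) (Fin k) F =>
        vote h f β x p.1 = vote h f β x p.2).card ≤ cnt (gfun h f β x) * cM := by
    rw [collision_count h f β x, ← hsum, Finset.mul_sum]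
    apply Finset.sum_le_sum
    intro a _
    rw [sq]
    exact Nat.mul_le_mul_right _ (gfun_max h f β x a)
  have hneq := neq_bound h f β hβ x
  -- cV * (cM * cM) ≤ cV * (cnt g * cM) + 2*Q*(cM*R)
  have main : cV * (cM * cM) ≤ cV * (cnt (gfun h f β x) * cM) + 2 * Q * (cM * R) := by
    calc cV * (cM * cM) = cV * ((univ.filter fun p : Matrix (Fin n) (Fin k) F × Matrix (Fin n) (Fin k) F =>
            vote h f β x p.1 = vote h f β x p.2).card
          + (univ.filter fun p : Matrix (Fin n) (Fin k) F × Matrix (Fin n) (Fin k) F =>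
            ¬ (vote h f β x p.1 = vote h f β x p.2)).card) := by rw [hpart]
      _ = cV * (univ.filter fun p : Matrix (Fin n) (Fin k) F × Matrix (Fin n) (Fin k) F =>
            vote h f β x p.1 = vote h f β x p.2).card
          + cV * (univ.filter fun p : Matrix (Fin n) (Fin k) F × Matrix (Fin n) (Fin k) F =>
            vote h f β x p.1 ≠ vote h f β x p.2).card := by rw [Nat.mul_add]
      _ ≤ cV * (cnt (gfun h f β x) * cM) + 2 * Q * (cM * R) :=
          Nat.add_le_add (Nat.mul_le_mul_left _ hcoll) hneq
  have hcMpos : 0 < cM := Fintype.card_pos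
  have : cM * (cV * cM) ≤ cM * (cV * cnt (gfun h f β x) + 2 * Q * R) := by
    calc cM * (cV * cM) = cV * (cM * cM) := by ring
      _ ≤ cV * (cnt (gfun h f β x) * cM) + 2 * Q * (cM * R) := main
      _ = cM * (cV * cnt (gfun h f β x) + 2 * Q * R) := by ring
  exact Nat.le_of_mul_le_mul_left this hcMpos

lemma star2 (hβ : h β ≠ 0) (x : Fin n → F) :
    Fintype.card (Fin n → F) *
      (univ.filter fun M : Matrix (Fin n) (Fin k) F => vote h f β x M ≠ gfun h f β x).card
    ≤ 2 * (univ.filter fun y : Fin k → F => h y ≠ 0).card * rejC h f := by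
  classical
  have hpart : (univ.filter fun M : Matrix (Fin n) (Fin k) F => vote h f β x M = gfun h f β x).card
      + (univ.filter fun M : Matrix (Fin n) (Fin k) F => ¬ (vote h f β x M = gfun h f β x)).card
      = Fintype.card (Matrix (Fin n) (Fin k) F) := by
    rw [Finset.card_filter_add_card_filter_not, Finset.card_univ]
  have hstar := star h f β hβ x
  rw [← hpart, Nat.mul_add] at hstar
  exact Nat.le_of_add_le_add_left hstar

lemma dist_bound (hβ : h β ≠ 0) :
    (univ.filter fun x : Fin n → F => f x ≠ gfun h f β x).card *
      (Fintype.card (Fin n → F) * Fintype.card (Matrix (Fin n) (Fin k) F))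
    ≤ Fintype.card (Fin n → F) * rejC h f
      + 2 * (univ.filter fun y : Fin k → F => h y ≠ 0).card * rejC h f *
          (univ.filter fun x : Fin n → F => f x ≠ gfun h f β x).card := by
  classical
  set cV := Fintype.card (Fin n → F) with hcV
  set cM := Fintype.card (Matrix (Fin n) (Fin k) F) with hcM
  set Q := (univ.filter fun y : Fin k → F => h y ≠ 0).card with hQd
  set D := (univ.filter fun x : Fin n → F => f x ≠ gfun h f β x) with hD
  set Rej := (univ.filter fun Mb : Matrix (Fin n) (Fin k) F × (Fin n → F) =>
    tval h f Mb.1 Mb.2 ≠ 0) with hRej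
  have hRfib : rejC h f = ∑ x : Fin n → F, (Rej.filter fun Mb => Mb.1.mulVec β + Mb.2 = x).card := by
    rw [rejC, ← hRej]
    exact Finset.card_eq_sum_card_fiberwise
      (f := fun Mb : Matrix (Fin n) (Fin k) F × (Fin n → F) => Mb.1.mulVec β + Mb.2)
      (s := Rej) (t := univ) (fun p _ => mem_univ _)
  have hx : ∀ x ∈ D,
      (univ.filter fun M : Matrix (Fin n) (Fin k) F => vote h f β x M = gfun h f β x).card
      ≤ (Rej.filter fun Mb => Mb.1.mulVec β + Mb.2 = x).card := by
    intro x hxD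
    rw [hD] at hxD
    simp only [mem_filter, mem_univ, true_and] at hxD
    apply Finset.card_le_card_of_injOn (fun M => (M, x - M.mulVec β))
    · intro M hM
      simp only [mem_coe, mem_filter, mem_univ, true_and] at hM
      have hpt : M.mulVec β + (x - M.mulVec β) = x := by abel
      rw [mem_coe, mem_filter, hRej, mem_filter]
      refine ⟨⟨mem_univ _, ?_⟩, hpt⟩
      rw [rej_iff h f β hβ, hpt, hM]
      exact hxD
    · intro a _ b _ hab
      exact congrArg Prod.fst hab
  have hRge : ∑ x ∈ D, (univ.filter fun M : Matrix (Fin n) (Fin k) F =>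
      vote h f β x M = gfun h f β x).card ≤ rejC h f := by
    rw [hRfib]
    calc ∑ x ∈ D, (univ.filter fun M : Matrix (Fin n) (Fin k) F =>
        vote h f β x M = gfun h f β x).card
        ≤ ∑ x ∈ D, (Rej.filter fun Mb => Mb.1.mulVec β + Mb.2 = x).card :=
          Finset.sum_le_sum hx
      _ ≤ ∑ x : Fin n → F, (Rej.filter fun Mb => Mb.1.mulVec β + Mb.2 = x).card :=
          Finset.sum_le_sum_of_subset (hD ▸ Finset.filter_subset _ _)
  calc D.card * (cV * cM) = ∑ _x ∈ D, cV * cM := by rw [Finset.sum_const, smul_eq_mul]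
    _ ≤ ∑ x ∈ D, (cV * (univ.filter fun M : Matrix (Fin n) (Fin k) F =>
          vote h f β x M = gfun h f β x).card + 2 * Q * rejC h f) :=
        Finset.sum_le_sum (fun x _ => star h f β hβ x)
    _ = cV * (∑ x ∈ D, (univ.filter fun M : Matrix (Fin n) (Fin k) F =>
          vote h f β x M = gfun h f β x).card) + D.card * (2 * Q * rejC h f) := by
        rw [Finset.sum_add_distrib, Finset.mul_sum, Finset.sum_const, smul_eq_mul]
    _ ≤ cV * rejC h f + 2 * Q * rejC h f * D.card := by
        refine Nat.add_le_add (Nat.mul_le_mul_left _ hRge) ?_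
        rw [Nat.mul_comm]

def Dmat (Θ : Fin k → Matrix (Fin n) (Fin k) F) (α : Fin k → F) : Matrix (Fin n) (Fin k) F :=
  fun i j => (Θ j).mulVec α i

def Cmat (Θ : Fin k → Matrix (Fin n) (Fin k) F) (u : Fin k → F) : Matrix (Fin n) (Fin k) F :=
  ∑ j, u j • Θ j

lemma DC (Θ : Fin k → Matrix (Fin n) (Fin k) F) (α u : Fin k → F) :
    (Dmat Θ α).mulVec u = (Cmat Θ u).mulVec α := by
  funext i
  simp only [Matrix.mulVec, dotProduct, Dmat, Cmat, Matrix.sum_apply,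
    Matrix.smul_apply, smul_eq_mul, Finset.sum_mul]
  rw [Finset.sum_comm]
  apply Finset.sum_congr rfl
  intro j _
  apply Finset.sum_congr rfl
  intro m _
  ring

lemma shiftA_count (α : Fin k → F) (P : Matrix (Fin n) (Fin k) F → Prop) [DecidablePred P] :
    (univ.filter fun p : Matrix (Fin n) (Fin k) F × (Fin k → Matrix (Fin n) (Fin k) F) =>
      P (p.1 + Dmat p.2 α)).card
    = Fintype.card (Matrix (Fin n) (Fin k) F) ^ k *
        (univ.filter P).card := by
  classical
  have := fiber_transfer
    (ψ := fun p : Matrix (Fin n) (Fin k) F × (Fin k → Matrix (Fin n) (Fin k) F) =>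
      p.1 + Dmat p.2 α)
    (e := 1) (m := Fintype.card (Matrix (Fin n) (Fin k) F) ^ k) (P := P) ?_
  · rw [one_mul] at this; exact this
  · intro M
    rw [one_mul]
    have : (univ.filter fun p : Matrix (Fin n) (Fin k) F × (Fin k → Matrix (Fin n) (Fin k) F) =>
        p.1 + Dmat p.2 α = M).card = Fintype.card (Fin k → Matrix (Fin n) (Fin k) F) := by
      rw [← Finset.card_univ]
      apply Finset.card_bij (fun p _ => p.2)
      · intro p _; exact mem_univ _
      · rintro ⟨M₁, Θ₁⟩ h1 ⟨M₂, Θ₂⟩ h2 hΘ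
        simp only [mem_filter, mem_univ, true_and] at h1 h2
        simp only at hΘ
        subst hΘ
        have : M₁ = M₂ := by
          have := h1.trans h2.symm
          exact add_right_cancel this
        rw [this]
      · intro Θ _
        exact ⟨(M - Dmat Θ α, Θ), by
          simp only [mem_filter, mem_univ, true_and]; abel, rfl⟩
    rw [this, Fintype.card_fun, Fintype.card_fin]

lemma badB_count {γ : Fin k → F} (hγ : γ ≠ β) (Ms : Matrix (Fin n) (Fin k) F) (bs : Fin n → F) :
    (Fintype.card (Fin n → F) * Fintype.card (Matrix (Fin n) (Fin k) F)) *
      (univ.filter fun p : Matrix (Fin n) (Fin k) F × (Fin k → Matrix (Fin n) (Fin k) F) =>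
        tval h f (Ms + Cmat p.2 (γ - β)) (bs + p.1.mulVec (γ - β)) ≠ 0).card
    = (Fintype.card (Matrix (Fin n) (Fin k) F) ^ k * Fintype.card (Matrix (Fin n) (Fin k) F))
        * rejC h f := by
  classical
  have := fiber_transfer
    (ψ := fun p : Matrix (Fin n) (Fin k) F × (Fin k → Matrix (Fin n) (Fin k) F) =>
      (Ms + Cmat p.2 (γ - β), bs + p.1.mulVec (γ - β)))
    (e := Fintype.card (Fin n → F) * Fintype.card (Matrix (Fin n) (Fin k) F))
    (m := Fintype.card (Matrix (Fin n) (Fin k) F) ^ k * Fintype.card (Matrix (Fin n) (Fin k) F))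
    (P := fun Mb : Matrix (Fin n) (Fin k) F × (Fin n → F) => tval h f Mb.1 Mb.2 ≠ 0) ?_
  · exact this
  · rintro ⟨M, b⟩
    have hfe : (univ.filter fun p : Matrix (Fin n) (Fin k) F × (Fin k → Matrix (Fin n) (Fin k) F) =>
        (Ms + Cmat p.2 (γ - β), bs + p.1.mulVec (γ - β)) = (M, b))
        = (univ.filter fun M₁ : Matrix (Fin n) (Fin k) F => M₁.mulVec (γ - β) = b - bs) ×ˢ
          (univ.filter fun Θ : Fin k → Matrix (Fin n) (Fin k) F =>
            ∑ j, (γ - β) j • Θ j = M - Ms) := by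
      ext p
      simp only [mem_filter, Finset.mem_product, mem_univ, true_and, Prod.mk.injEq, Cmat]
      constructor
      · rintro ⟨h1, h2⟩
        exact ⟨by rw [← h2]; abel, by rw [← h1]; abel⟩
      · rintro ⟨h1, h2⟩
        exact ⟨by rw [h2]; abel, by rw [h1]; abel⟩
    rw [hfe, Finset.card_product]
    have h1 := mat_fiber (u := γ - β) (sub_ne_zero_of_ne hγ) (b - bs)
    have h2 := smul_fiber_card (F := F) (G := Matrix (Fin n) (Fin k) F)
      (v := γ - β) (sub_ne_zero_of_ne hγ) (M - Ms)
    calc (Fintype.card (Fin n → F) * Fintype.card (Matrix (Fin n) (Fin k) F)) *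
        ((univ.filter fun M₁ : Matrix (Fin n) (Fin k) F => M₁.mulVec (γ - β) = b - bs).card *
         (univ.filter fun Θ : Fin k → Matrix (Fin n) (Fin k) F =>
            ∑ j, (γ - β) j • Θ j = M - Ms).card)
        = (Fintype.card (Fin n → F) *
            (univ.filter fun M₁ : Matrix (Fin n) (Fin k) F => M₁.mulVec (γ - β) = b - bs).card) *
          (Fintype.card (Matrix (Fin n) (Fin k) F) *
            (univ.filter fun Θ : Fin k → Matrix (Fin n) (Fin k) F =>
              ∑ j, (γ - β) j • Θ j = M - Ms).card) := by ring
      _ = Fintype.card (Matrix (Fin n) (Fin k) F) *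
            (Fintype.card (Matrix (Fin n) (Fin k) F) ^ k) := by rw [h1, h2]
      _ = Fintype.card (Matrix (Fin n) (Fin k) F) ^ k * Fintype.card (Matrix (Fin n) (Fin k) F) := by
          ring

lemma gfun_family (hβ : h β ≠ 0)
    (hsmall : 3 * ((univ.filter fun y : Fin k → F => h y ≠ 0).card) ^ 2 * rejC h f
      < Fintype.card (Fin n → F) * Fintype.card (Matrix (Fin n) (Fin k) F))
    (Ms : Matrix (Fin n) (Fin k) F) (bs : Fin n → F) :
    ∑ α : Fin k → F, gfun h f β (Ms.mulVec α + bs) * h α = 0 := by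
  classical
  set cV := Fintype.card (Fin n → F) with hcV
  set cM := Fintype.card (Matrix (Fin n) (Fin k) F) with hcM
  set Q := (univ.filter fun y : Fin k → F => h y ≠ 0).card with hQd
  set R := rejC h f with hRd
  set supp := (univ.filter fun y : Fin k → F => h y ≠ 0) with hsupp
  set SE := supp.erase β with hSE
  set BadA := fun α : Fin k → F =>
    (univ.filter fun p : Matrix (Fin n) (Fin k) F × (Fin k → Matrix (Fin n) (Fin k) F) =>
      vote h f β (Ms.mulVec α + bs) (p.1 + Dmat p.2 α) ≠ gfun h f β (Ms.mulVec α + bs)) with hBadA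
  set BadB := fun γ : Fin k → F =>
    (univ.filter fun p : Matrix (Fin n) (Fin k) F × (Fin k → Matrix (Fin n) (Fin k) F) =>
      tval h f (Ms + Cmat p.2 (γ - β)) (bs + p.1.mulVec (γ - β)) ≠ 0) with hBadB
  set Bad := supp.biUnion BadA ∪ SE.biUnion BadB with hBad
  have hcVpos : 0 < cV := Fintype.card_pos
  have hcMpos : 0 < cM := Fintype.card_pos
  have hQpos : 1 ≤ Q := by
    have hmem : β ∈ supp := by
      rw [hsupp]
      simp only [mem_filter, mem_univ, true_and]
      exact hβ
    rw [hQd]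
    exact Finset.card_pos.2 ⟨β, hmem⟩
  have hA : ∀ α, cV * (BadA α).card ≤ cM ^ k * (2 * Q * R) := by
    intro α
    have hsc := shiftA_count (F := F) (k := k) (n := n) α
      (fun M => vote h f β (Ms.mulVec α + bs) M ≠ gfun h f β (Ms.mulVec α + bs))
    have hba : (BadA α).card = cM ^ k * (univ.filter fun M : Matrix (Fin n) (Fin k) F =>
        vote h f β (Ms.mulVec α + bs) M ≠ gfun h f β (Ms.mulVec α + bs)).card := by
      rw [hBadA]
      exact hsc
    rw [hba]
    calc cV * (cM ^ k * (univ.filter fun M => vote h f β (Ms.mulVec α + bs) M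
          ≠ gfun h f β (Ms.mulVec α + bs)).card)
        = cM ^ k * (cV * (univ.filter fun M => vote h f β (Ms.mulVec α + bs) M
          ≠ gfun h f β (Ms.mulVec α + bs)).card) := by ring
      _ ≤ cM ^ k * (2 * Q * R) :=
          Nat.mul_le_mul_left _ (star2 h f β hβ (Ms.mulVec α + bs))
  have hB : ∀ γ ∈ SE, cV * (BadB γ).card = cM ^ k * R := by
    intro γ hγ
    rw [hSE, mem_erase] at hγ
    have hthis := badB_count h f β hγ.1 Ms bs
    have hbb : (BadB γ).card = (univ.filter fun p : Matrix (Fin n) (Fin k) F × (Fin k → Matrix (Fin n) (Fin k) F) =>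
        tval h f (Ms + Cmat p.2 (γ - β)) (bs + p.1.mulVec (γ - β)) ≠ 0).card := by
      simp only [hBadB]
    apply Nat.eq_of_mul_eq_mul_left hcMpos
    calc cM * (cV * (BadB γ).card)
        = (cV * cM) * (univ.filter fun p : Matrix (Fin n) (Fin k) F × (Fin k → Matrix (Fin n) (Fin k) F) =>
            tval h f (Ms + Cmat p.2 (γ - β)) (bs + p.1.mulVec (γ - β)) ≠ 0).card := by
          rw [hbb]; ring
      _ = (cM ^ k * cM) * R := hthis
      _ = cM * (cM ^ k * R) := by ring
  have hBadCard : cV * Bad.card ≤ cM ^ k * (3 * Q ^ 2 * R) := by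
    have h1 : Bad.card ≤ ∑ α ∈ supp, (BadA α).card + ∑ γ ∈ SE, (BadB γ).card := by
      calc Bad.card ≤ (supp.biUnion BadA).card + (SE.biUnion BadB).card :=
            Finset.card_union_le _ _
        _ ≤ ∑ α ∈ supp, (BadA α).card + ∑ γ ∈ SE, (BadB γ).card :=
            Nat.add_le_add (Finset.card_biUnion_le) (Finset.card_biUnion_le)
    calc cV * Bad.card ≤ cV * (∑ α ∈ supp, (BadA α).card + ∑ γ ∈ SE, (BadB γ).card) :=
          Nat.mul_le_mul_left _ h1
      _ = ∑ α ∈ supp, cV * (BadA α).card + ∑ γ ∈ SE, cV * (BadB γ).card := by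
          rw [Nat.mul_add, Finset.mul_sum, Finset.mul_sum]
      _ ≤ ∑ _α ∈ supp, cM ^ k * (2 * Q * R) + ∑ γ ∈ SE, cM ^ k * R := by
          refine Nat.add_le_add (Finset.sum_le_sum fun α _ => hA α) ?_
          refine Finset.sum_le_sum fun γ hγ => le_of_eq (hB γ hγ)
      _ = Q * (cM ^ k * (2 * Q * R)) + SE.card * (cM ^ k * R) := by
          rw [Finset.sum_const, Finset.sum_const, smul_eq_mul, smul_eq_mul]
      _ ≤ Q * (cM ^ k * (2 * Q * R)) + Q * (cM ^ k * R) := by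
          refine Nat.add_le_add_left (Nat.mul_le_mul_right _ ?_) _
          calc SE.card ≤ supp.card := Finset.card_erase_le
            _ = Q := rfl
      _ ≤ cM ^ k * (3 * Q ^ 2 * R) := by
          have e1 : Q * (cM ^ k * (2 * Q * R)) + Q * (cM ^ k * R)
              = cM ^ k * R * (2 * Q ^ 2 + Q) := by ring
          have e2 : cM ^ k * (3 * Q ^ 2 * R) = cM ^ k * R * (3 * Q ^ 2) := by ring
          rw [e1, e2]
          apply Nat.mul_le_mul_left
          nlinarith [hQpos]
  obtain ⟨pp, hpp⟩ : ∃ pp : Matrix (Fin n) (Fin k) F × (Fin k → Matrix (Fin n) (Fin k) F),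
      pp ∉ Bad := by
    by_contra hc
    push_neg at hc
    have hsubU : (univ : Finset (Matrix (Fin n) (Fin k) F × (Fin k → Matrix (Fin n) (Fin k) F)))
        ⊆ Bad := fun p _ => hc p
    have hcardle := Finset.card_le_card hsubU
    have hcarduniv : (univ : Finset (Matrix (Fin n) (Fin k) F × (Fin k → Matrix (Fin n) (Fin k) F))).card
        = cM * cM ^ k := by
      rw [Finset.card_univ, Fintype.card_prod, Fintype.card_fun, Fintype.card_fin]
    have hlt : cV * Bad.card < cV * (cM * cM ^ k) := by
      calc cV * Bad.card ≤ cM ^ k * (3 * Q ^ 2 * R) := hBadCard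
        _ < cM ^ k * (cV * cM) := by
            have hpow : 0 < cM ^ k := pow_pos hcMpos k
            exact mul_lt_mul_of_pos_left hsmall hpow
        _ = cV * (cM * cM ^ k) := by ring
    have := Nat.lt_of_mul_lt_mul_left hlt
    omega
  have hppA : ∀ α, h α ≠ 0 →
      vote h f β (Ms.mulVec α + bs) (pp.1 + Dmat pp.2 α) = gfun h f β (Ms.mulVec α + bs) := by
    intro α hα0
    by_contra hne
    apply hpp
    rw [hBad]
    apply Finset.mem_union_left
    apply Finset.mem_biUnion.2
    refine ⟨α, by rw [hsupp]; simp only [mem_filter, mem_univ, true_and]; exact hα0, ?_⟩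
    rw [hBadA]
    simp only [mem_filter, mem_univ, true_and]
    exact hne
  have hppB : ∀ γ, γ ≠ β → h γ ≠ 0 →
      tval h f (Ms + Cmat pp.2 (γ - β)) (bs + pp.1.mulVec (γ - β)) = 0 := by
    intro γ hγβ hγ0
    by_contra hne
    apply hpp
    rw [hBad]
    apply Finset.mem_union_right
    apply Finset.mem_biUnion.2
    refine ⟨γ, by
      rw [hSE, mem_erase, hsupp]
      simp only [mem_filter, mem_univ, true_and]
      exact ⟨hγβ, hγ0⟩, ?_⟩
    rw [hBadB]
    simp only [mem_filter, mem_univ, true_and]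
    exact hne
  have key : h β * (∑ α : Fin k → F, gfun h f β (Ms.mulVec α + bs) * h α) = 0 := by
    rw [Finset.mul_sum]
    have term : ∀ α : Fin k → F,
        h β * (gfun h f β (Ms.mulVec α + bs) * h α)
        = -∑ γ ∈ univ.erase β,
            f ((Ms + Cmat pp.2 (γ - β)).mulVec α + (bs + pp.1.mulVec (γ - β))) * h γ * h α := by
      intro α
      by_cases hα0 : h α = 0
      · simp [hα0]
      · rw [← hppA α hα0]
        have hv : h β * vote h f β (Ms.mulVec α + bs) (pp.1 + Dmat pp.2 α)
            = -svote h f β (Ms.mulVec α + bs) (pp.1 + Dmat pp.2 α) := by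
          rw [vote]
          field_simp
        calc h β * (vote h f β (Ms.mulVec α + bs) (pp.1 + Dmat pp.2 α) * h α)
            = (h β * vote h f β (Ms.mulVec α + bs) (pp.1 + Dmat pp.2 α)) * h α := by ring
          _ = -svote h f β (Ms.mulVec α + bs) (pp.1 + Dmat pp.2 α) * h α := by rw [hv]
          _ = -∑ γ ∈ univ.erase β,
                f ((pp.1 + Dmat pp.2 α).mulVec (γ - β) + (Ms.mulVec α + bs)) * h γ * h α := by
              rw [svote, neg_mul, Finset.sum_mul]
          _ = -∑ γ ∈ univ.erase β,
                f ((Ms + Cmat pp.2 (γ - β)).mulVec α + (bs + pp.1.mulVec (γ - β))) * h γ * h α := by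
              rw [neg_inj]
              apply Finset.sum_congr rfl
              intro γ _
              have hpt : (pp.1 + Dmat pp.2 α).mulVec (γ - β) + (Ms.mulVec α + bs)
                  = (Ms + Cmat pp.2 (γ - β)).mulVec α + (bs + pp.1.mulVec (γ - β)) := by
                rw [Matrix.add_mulVec, Matrix.add_mulVec, DC]
                abel
              rw [hpt]
    rw [Finset.sum_congr rfl (fun α _ => term α), Finset.sum_neg_distrib, neg_eq_zero]
    rw [Finset.sum_comm]
    apply Finset.sum_eq_zero
    intro γ hγ
    by_cases hγ0 : h γ = 0
    · simp [hγ0]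
    · have hB0 := hppB γ (Finset.mem_erase.1 hγ).1 hγ0
      calc ∑ α : Fin k → F,
          f ((Ms + Cmat pp.2 (γ - β)).mulVec α + (bs + pp.1.mulVec (γ - β))) * h γ * h α
          = (∑ α : Fin k → F,
              f ((Ms + Cmat pp.2 (γ - β)).mulVec α + (bs + pp.1.mulVec (γ - β))) * h α) * h γ := by
            rw [Finset.sum_mul]
            apply Finset.sum_congr rfl
            intro α _
            ring
        _ = tval h f (Ms + Cmat pp.2 (γ - β)) (bs + pp.1.mulVec (γ - β)) * h γ := rfl
        _ = 0 := by rw [hB0, zero_mul]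
  rcases mul_eq_zero.1 key with h1 | h2
  · exact absurd h1 hβ
  · exact h2


lemma ks_final_small (Qn Rn cVn cMn Dcn : ℕ) (δ : ℝ)
    (hQpos : 1 ≤ Qn) (hcVpos : 0 < cVn) (hcMpos : 0 < cMn)
    (hδle : δ ≤ (Dcn : ℝ) / (cVn : ℝ))
    (hdist : Dcn * (cVn * cMn) ≤ cVn * Rn + 2 * Qn * Rn * Dcn)
    (hcase : 4 * Qn ^ 2 * Rn < cVn * cMn) :
    δ / (4 * (Qn : ℝ) ^ 2) ≤ (Rn : ℝ) / ((cMn * cVn : ℕ) : ℝ) := by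
  have hQ1 : (1:ℝ) ≤ (Qn:ℝ) := by exact_mod_cast hQpos
  have hcV0 : (0:ℝ) < (cVn:ℝ) := by exact_mod_cast hcVpos
  have hcM0 : (0:ℝ) < (cMn:ℝ) := by exact_mod_cast hcMpos
  have hR0 : (0:ℝ) ≤ (Rn:ℝ) := Nat.cast_nonneg _
  have hDc0 : (0:ℝ) ≤ (Dcn:ℝ) := Nat.cast_nonneg _
  have hdistR : (Dcn:ℝ) * ((cVn:ℝ) * (cMn:ℝ)) ≤ (cVn:ℝ) * (Rn:ℝ) + 2 * (Qn:ℝ) * (Rn:ℝ) * (Dcn:ℝ) := by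
    exact_mod_cast hdist
  have hcaseR : 4 * (Qn:ℝ) ^ 2 * (Rn:ℝ) < (cVn:ℝ) * (cMn:ℝ) := by exact_mod_cast hcase
  have hQRpos : (0:ℝ) < 4 * (Qn:ℝ) ^ 2 := by nlinarith
  have hdenpos : (0:ℝ) < ((cMn * cVn : ℕ) : ℝ) := by
    have : 0 < cMn * cVn := Nat.mul_pos hcMpos hcVpos
    exact_mod_cast this
  have hδcV : δ * (cVn:ℝ) ≤ (Dcn:ℝ) := by
    have hstep := mul_le_mul_of_nonneg_right hδle hcV0.le
    calc δ * (cVn:ℝ) ≤ (Dcn:ℝ) / (cVn:ℝ) * (cVn:ℝ) := hstep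
      _ = (Dcn:ℝ) := by field_simp
  have hDcM : (Dcn:ℝ) * (cMn:ℝ) ≤ 2 * (Rn:ℝ) := by
    have hkey : (cVn:ℝ) * ((Dcn:ℝ) * (cMn:ℝ)) ≤ (cVn:ℝ) * (2 * (Rn:ℝ)) := by
      nlinarith [mul_le_mul_of_nonneg_right hcaseR.le hDc0,
        mul_nonneg (mul_nonneg (Nat.cast_nonneg Qn : (0:ℝ) ≤ (Qn:ℝ)) hR0) hDc0]
    exact le_of_mul_le_mul_left hkey hcV0
  rw [div_le_div_iff₀ hQRpos hdenpos]
  have hcast : ((cMn * cVn : ℕ) : ℝ) = (cMn:ℝ) * (cVn:ℝ) := by push_cast; ring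
  rw [hcast]
  calc δ * ((cMn:ℝ) * (cVn:ℝ)) = (δ * (cVn:ℝ)) * (cMn:ℝ) := by ring
    _ ≤ (Dcn:ℝ) * (cMn:ℝ) := mul_le_mul_of_nonneg_right hδcV hcM0.le
    _ ≤ 2 * (Rn:ℝ) := hDcM
    _ ≤ (Rn:ℝ) * (4 * (Qn:ℝ) ^ 2) := by
        have hQQ : (1:ℝ) ≤ (Qn:ℝ) ^ 2 := by nlinarith
        nlinarith [mul_le_mul_of_nonneg_left hQQ hR0, mul_nonneg hR0 (sq_nonneg (Qn:ℝ))]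

lemma ks_final_large (Qn Rn cVn cMn : ℕ) (δ : ℝ)
    (hQpos : 1 ≤ Qn) (hcVpos : 0 < cVn) (hcMpos : 0 < cMn)
    (hδ1 : δ ≤ 1) (hcase : cVn * cMn ≤ 4 * Qn ^ 2 * Rn) :
    δ / (4 * (Qn : ℝ) ^ 2) ≤ (Rn : ℝ) / ((cMn * cVn : ℕ) : ℝ) := by
  have hQ1 : (1:ℝ) ≤ (Qn:ℝ) := by exact_mod_cast hQpos
  have hQRpos : (0:ℝ) < 4 * (Qn:ℝ) ^ 2 := by nlinarith
  have hdenpos : (0:ℝ) < ((cMn * cVn : ℕ) : ℝ) := by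
    have : 0 < cMn * cVn := Nat.mul_pos hcMpos hcVpos
    exact_mod_cast this
  have hcaseR : (cVn:ℝ) * (cMn:ℝ) ≤ 4 * (Qn:ℝ) ^ 2 * (Rn:ℝ) := by exact_mod_cast hcase
  refine le_trans ((div_le_div_iff_of_pos_right hQRpos).2 hδ1) ?_
  rw [div_le_div_iff₀ hQRpos hdenpos]
  have hcast : ((cMn * cVn : ℕ) : ℝ) = (cMn:ℝ) * (cVn:ℝ) := by push_cast; ring
  rw [hcast]
  nlinarith [hcaseR]


/-- **Kaufman–Sudan soundness of the inner-product test (Lemma 2.9 of [KS]).**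
For `h : F_q^k → F_q` not identically zero with `Q = |supp h|`, any `f : F_q^n → F_q`, and
`δ = min_{g ∈ F_n(h)} Pr_x[f x ≠ g x]`, the probability over a uniformly random affine map
`T` (given by a uniformly random pair of an `n × k` matrix `M` and shift `b`) that
`⟨f ∘ T, h⟩ ≠ 0` is at least `δ / (4 Q²)`. -/
theorem kaufman_sudan_soundness (q : ℕ) (hq : IsPrimePow q)
    (F : Type) [Field F] [Fintype F] [DecidableEq F] (hcard : Fintype.card F = q)
    (k n : ℕ) (hk : 1 ≤ k) (hkn : k ≤ n)
    (h : (Fin k → F) → F) (hne : h ≠ fun _ => 0)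
    (Q : ℕ) (hQ : Q = (univ.filter fun x : Fin k → F => h x ≠ 0).card)
    (f : (Fin n → F) → F)
    (δ : ℝ)
    (hδ : δ = sInf {x : ℝ | ∃ g : (Fin n → F) → F,
        (∀ (M : Matrix (Fin n) (Fin k) F) (b : Fin n → F),
          ∑ α : Fin k → F, g (M.mulVec α + b) * h α = 0) ∧
        x = ((univ.filter fun v : Fin n → F => f v ≠ g v).card : ℝ) / (q : ℝ) ^ n}) :
    δ / (4 * (Q : ℝ) ^ 2) ≤
      (((univ : Finset (Matrix (Fin n) (Fin k) F × (Fin n → F))).filter fun Mb =>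
          ∑ α : Fin k → F, f (Mb.1.mulVec α + Mb.2) * h α ≠ 0).card : ℝ) /
        ((univ : Finset (Matrix (Fin n) (Fin k) F × (Fin n → F))).card : ℝ) := by
  obtain ⟨β, hβ⟩ : ∃ β, h β ≠ 0 := by
    by_contra hc
    push_neg at hc
    exact hne (funext hc)
  set cV := Fintype.card (Fin n → F) with hcVd
  set cM := Fintype.card (Matrix (Fin n) (Fin k) F) with hcMd
  have hcV : cV = q ^ n := by
    rw [hcVd, Fintype.card_fun, hcard, Fintype.card_fin]
  have hcVpos : 0 < cV := Fintype.card_pos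
  have hcMpos : 0 < cM := Fintype.card_pos
  have hQpos : 1 ≤ Q := by
    rw [hQ]
    refine Finset.card_pos.2 ⟨β, ?_⟩
    simp only [mem_filter, mem_univ, true_and]
    exact hβ
  set R := rejC h f with hRd
  have hqpos : 0 < q := hq.pos
  have hqnpos : (0:ℝ) < (q:ℝ) ^ n := by
    have : (0:ℝ) < (q:ℝ) := by exact_mod_cast hqpos
    positivity
  have hqncV : ((cV : ℕ) : ℝ) = (q:ℝ) ^ n := by
    rw [hcV]; push_cast; ring
  -- rewrite the goal
  have hRHSnum : ((univ : Finset (Matrix (Fin n) (Fin k) F × (Fin n → F))).filter fun Mb =>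
      ∑ α : Fin k → F, f (Mb.1.mulVec α + Mb.2) * h α ≠ 0).card = R := rfl
  have hRHSden : ((univ : Finset (Matrix (Fin n) (Fin k) F × (Fin n → F))).card) = cM * cV := by
    rw [Finset.card_univ, Fintype.card_prod]
  rw [hRHSnum, hRHSden]
  have hQRpos : (0:ℝ) < 4 * (Q:ℝ) ^ 2 := by
    have h1 : (1:ℝ) ≤ (Q:ℝ) := by exact_mod_cast hQpos
    nlinarith
  have hdenpos : (0:ℝ) < ((cM * cV : ℕ) : ℝ) := by
    have : 0 < cM * cV := Nat.mul_pos hcMpos hcVpos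
    exact_mod_cast this
  have hBdd : BddBelow {x : ℝ | ∃ g : (Fin n → F) → F,
      (∀ (M : Matrix (Fin n) (Fin k) F) (b : Fin n → F),
        ∑ α : Fin k → F, g (M.mulVec α + b) * h α = 0) ∧
      x = ((univ.filter fun v : Fin n → F => f v ≠ g v).card : ℝ) / (q : ℝ) ^ n} := by
    refine ⟨0, ?_⟩
    rintro x ⟨g, _, rfl⟩
    positivity
  have hδ1 : δ ≤ 1 := by
    rw [hδ]
    have hmem : ((univ.filter fun v : Fin n → F => f v ≠ (fun _ => (0:F)) v).card : ℝ) / (q : ℝ) ^ n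
        ∈ {x : ℝ | ∃ g : (Fin n → F) → F,
          (∀ (M : Matrix (Fin n) (Fin k) F) (b : Fin n → F),
            ∑ α : Fin k → F, g (M.mulVec α + b) * h α = 0) ∧
          x = ((univ.filter fun v : Fin n → F => f v ≠ g v).card : ℝ) / (q : ℝ) ^ n} :=
      ⟨fun _ => 0, fun M b => by simp, rfl⟩
    refine le_trans (csInf_le hBdd hmem) ?_
    rw [div_le_one hqnpos]
    have hle : (univ.filter fun v : Fin n → F => f v ≠ (fun _ => (0:F)) v).card ≤ cV := by
      rw [hcVd, ← Finset.card_univ]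
      exact Finset.card_filter_le _ _
    calc ((univ.filter fun v : Fin n → F => f v ≠ (fun _ => (0:F)) v).card : ℝ)
        ≤ (cV : ℝ) := by exact_mod_cast hle
      _ = (q:ℝ) ^ n := hqncV
  by_cases hcase : 4 * Q ^ 2 * R < cV * cM
  · -- small rejection probability: use the corrected function
    have h34 : 3 * Q ^ 2 * R ≤ 4 * Q ^ 2 * R := by
      apply Nat.mul_le_mul_right
      nlinarith
    have h3 : 3 * (univ.filter fun y : Fin k → F => h y ≠ 0).card ^ 2 * rejC h f
        < Fintype.card (Fin n → F) * Fintype.card (Matrix (Fin n) (Fin k) F) := by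
      rw [← hQ]
      exact lt_of_le_of_lt h34 hcase
    have hfam := gfun_family h f β hβ h3
    set Dc := (univ.filter fun x : Fin n → F => f x ≠ gfun h f β x).card with hDcd
    have hmem : ((Dc : ℕ) : ℝ) / (q : ℝ) ^ n
        ∈ {x : ℝ | ∃ g : (Fin n → F) → F,
          (∀ (M : Matrix (Fin n) (Fin k) F) (b : Fin n → F),
            ∑ α : Fin k → F, g (M.mulVec α + b) * h α = 0) ∧
          x = ((univ.filter fun v : Fin n → F => f v ≠ g v).card : ℝ) / (q : ℝ) ^ n} :=
      ⟨gfun h f β, fun Ms bs => hfam Ms bs, rfl⟩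
    have hδle : δ ≤ ((Dc : ℕ) : ℝ) / (q : ℝ) ^ n := by
      rw [hδ]
      exact csInf_le hBdd hmem
    have hdist := dist_bound h f β hβ
    rw [← hQ, ← hRd, ← hcVd, ← hcMd, ← hDcd] at hdist
    have hδle2 : δ ≤ ((Dc:ℕ):ℝ) / ((cV:ℕ):ℝ) := by
      rw [hqncV]
      exact hδle
    exact ks_final_small Q R cV cM Dc δ hQpos hcVpos hcMpos hδle2 hdist hcase
  · -- large rejection probability: trivial bound via δ ≤ 1
    push_neg at hcase
    exact ks_final_large Q R cV cM δ hQpos hcVpos hcMpos hδ1 hcase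

end KS3
end

section
/- Let q = p^ℓ be a prime power with p prime, d ≥ 0, and write d+1 = s·(q − q/p) + r with integers s ≥ 0 and 0 ≤ r < q − q/p. Let k ≥ s+1, and define e* ∈ {0,…,q−1}^k by e*_i = q − q/p for 1 ≤ i ≤ s, e*_{s+1} = q−1, and e*_j = 0 for j > s+1; set d* := |e*|₁ = s(q − q/p) + q − 1. Then for every function g : F_q^k → F_q with deg(g) ≤ d* − 1, the number of points α ∈ F_q^k with g(α) ≠ α^{e*} is at least q^{k−s−1}; equivalently, Pr_{α uniform in F_q^k}[g(α) ≠ α^{e*}] ≥ q^{−(s+1)}. -/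
open Finset

section Aux
open MvPolynomial

lemma aux_subst_monomial {F : Type} [Field F] {n : ℕ} (t : ℕ) (β : Fin n → F)
    (v : Fin n →₀ ℕ) (c : F) :
    MvPolynomial.aeval
        (fun i : Fin n => if (i : ℕ) < t then (X i : MvPolynomial (Fin n) F) else C (β i))
        (monomial v c)
      = monomial (v.filter fun i : Fin n => (i : ℕ) < t)
          (c * ∏ i ∈ v.support.filter (fun i : Fin n => ¬ (i : ℕ) < t), β i ^ v i) := by
  classical
  rw [aeval_monomial, Finsupp.prod]
  have hsplit :
      (∏ i ∈ v.support,
          (if (i : ℕ) < t then (X i : MvPolynomial (Fin n) F) else C (β i)) ^ v i)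
        = (∏ i ∈ v.support.filter (fun i : Fin n => (i : ℕ) < t),
              (X i : MvPolynomial (Fin n) F) ^ v i)
          * ∏ i ∈ v.support.filter (fun i : Fin n => ¬ (i : ℕ) < t),
              (C (β i) : MvPolynomial (Fin n) F) ^ v i := by
    rw [← Finset.prod_ite]
    exact Finset.prod_congr rfl fun i _ => by split_ifs <;> rfl
  rw [hsplit]
  have h1 : (∏ i ∈ v.support.filter (fun i : Fin n => (i : ℕ) < t),
        (X i : MvPolynomial (Fin n) F) ^ v i)
      = monomial (v.filter fun i : Fin n => (i : ℕ) < t) (1 : F) := by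
    rw [monomial_eq, C_1, one_mul, Finsupp.prod, Finsupp.support_filter]
    exact Finset.prod_congr rfl fun i hi => by
      rw [Finsupp.filter_apply, if_pos (Finset.mem_filter.1 hi).2]
  have h2 : (∏ i ∈ v.support.filter (fun i : Fin n => ¬ (i : ℕ) < t),
        (C (β i) : MvPolynomial (Fin n) F) ^ v i)
      = C (∏ i ∈ v.support.filter (fun i : Fin n => ¬ (i : ℕ) < t), β i ^ v i) := by
    rw [map_prod]
    exact Finset.prod_congr rfl fun i _ => (map_pow _ _ _).symm
  rw [h1, h2, algebraMap_eq, mul_comm (monomial _ (1 : F)) (C _), ← mul_assoc, ← C_mul,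
    C_mul_monomial, mul_one]

lemma aux_coeff_subst_ne {F : Type} [Field F] {n t : ℕ} (β : Fin n → F)
    (P : MvPolynomial (Fin n) F) (w : Fin n →₀ ℕ)
    (hw : coeff w (MvPolynomial.aeval
        (fun i : Fin n => if (i : ℕ) < t then (X i : MvPolynomial (Fin n) F) else C (β i)) P)
        ≠ 0) :
    ∃ v ∈ P.support, v.filter (fun i : Fin n => (i : ℕ) < t) = w := by
  classical
  rw [P.as_sum, map_sum] at hw
  rw [coeff_sum] at hw
  obtain ⟨v, hv, hne⟩ := Finset.exists_ne_zero_of_sum_ne_zero hw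
  refine ⟨v, hv, ?_⟩
  rw [aux_subst_monomial, coeff_monomial] at hne
  by_contra h
  rw [if_neg h] at hne
  exact hne rfl

lemma aux_eval_subst {F : Type} [Field F] {n t : ℕ} (β γ : Fin n → F)
    (P : MvPolynomial (Fin n) F) :
    MvPolynomial.eval γ (MvPolynomial.aeval
        (fun i : Fin n => if (i : ℕ) < t then (X i : MvPolynomial (Fin n) F) else C (β i)) P)
      = MvPolynomial.eval (fun i : Fin n => if (i : ℕ) < t then γ i else β i) P := by
  rw [aeval_def, eval₂_comp_left (eval γ)]
  have h1 : (eval γ).comp (algebraMap F (MvPolynomial (Fin n) F)) = RingHom.id F := by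
    ext x
    simp [algebraMap_eq]
  have h2 : (eval γ) ∘ (fun i : Fin n =>
      if (i : ℕ) < t then (X i : MvPolynomial (Fin n) F) else C (β i))
      = fun i : Fin n => if (i : ℕ) < t then γ i else β i := by
    funext i
    by_cases hi : (i : ℕ) < t <;> simp [hi]
  rw [h1, h2]
  rfl

end Aux


/-- **A Schwartz–Zippel-type estimate (Lemma `Schwartz Zippel Modification`).**
Write `d + 1 = s(q - q/p) + r` with `0 ≤ r < q - q/p`, let `k ≥ s + 1`, define
`e* ∈ {0,…,q-1}^k` by `e*_i = q - q/p` for `i ≤ s`, `e*_{s+1} = q - 1`, `e*_j = 0` for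
`j > s + 1`, and set `d* = s(q - q/p) + q - 1`.  Then every `g : F_q^k → F_q` with
`deg g ≤ d* - 1` disagrees with `α ↦ α^{e*}` on at least `q^{k-s-1}` points; equivalently,
`Pr_α[g α ≠ α^{e*}] ≥ q^{-(s+1)}`. -/
theorem nonprime_disagreement_count (p ℓ q : ℕ) (hp : p.Prime) (hℓ : 1 ≤ ℓ)
    (hq : q = p ^ ℓ)
    (F : Type) [Field F] [Fintype F] [DecidableEq F] (hcard : Fintype.card F = q)
    (d s r : ℕ) (hd : d + 1 = s * (q - q / p) + r) (hr : r < q - q / p)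
    (k : ℕ) (hk : s + 1 ≤ k)
    (dstar : ℕ) (hdstar : dstar = s * (q - q / p) + q - 1)
    (g : (Fin k → F) → F)
    (hg : ∃ P : MvPolynomial (Fin k) F, IsReducedPolyOf q P g ∧ P.totalDegree ≤ dstar - 1) :
    q ^ (k - s - 1) ≤
      (univ.filter fun α : Fin k → F =>
        g α ≠ ∏ i : Fin k, α i ^
          (if (i : ℕ) < s then q - q / p else if (i : ℕ) = s then q - 1 else 0)).card := by
  classical
  obtain ⟨P, ⟨hPdeg, hPeval⟩, hPtot⟩ := hg
  have hq2 : 2 ≤ q := by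
    rw [hq]
    calc 2 ≤ p := hp.two_le
      _ ≤ p ^ ℓ := Nat.le_self_pow (by omega) p
  have hpq : p ≤ q := by rw [hq]; exact Nat.le_self_pow (by omega) p
  have hqp1 : 1 ≤ q / p := (Nat.one_le_div_iff hp.pos).2 hpq
  set qp := q / p with hqp
  set B := s * (q - qp) with hB
  -- the exponent function
  set e : Fin k → ℕ :=
    fun i => if (i : ℕ) < s then q - qp else if (i : ℕ) = s then q - 1 else 0 with he
  have he_le : ∀ i, e i ≤ q - 1 := by
    intro i
    simp only [he]
    split_ifs <;> omega
  have he0 : ∀ i : Fin k, ¬ (i : ℕ) < s + 1 → e i = 0 := by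
    intro i hi
    simp only [he]
    rw [if_neg (by omega), if_neg (by omega)]
  set E : Fin k →₀ ℕ := Finsupp.equivFunOnFinite.symm e with hE
  have hEapp : ∀ i, E i = e i := fun i => rfl
  have hsum : ∑ i : Fin k, e i = dstar := by
    have h1 : ∑ i : Fin k, e i = ∑ j ∈ Finset.range k,
        (if j < s then q - qp else if j = s then q - 1 else 0) :=
      Fin.sum_univ_eq_sum_range (fun j => if j < s then q - qp else if j = s then q - 1 else 0) k
    rw [h1, ← Finset.sum_range_add_sum_Ico _ hk, Finset.sum_range_succ]
    have h2 : ∑ j ∈ Finset.range s, (if j < s then q - qp else if j = s then q - 1 else 0)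
        = B := by
      rw [Finset.sum_congr rfl (fun j hj => if_pos (Finset.mem_range.1 hj)),
        Finset.sum_const, Finset.card_range, smul_eq_mul, hB]
    have h3 : (if s < s then q - qp else if s = s then q - 1 else 0) = q - 1 := by
      rw [if_neg (lt_irrefl s), if_pos rfl]
    have h4 : ∑ j ∈ Finset.Ico (s + 1) k,
        (if j < s then q - qp else if j = s then q - 1 else 0) = 0 := by
      refine Finset.sum_eq_zero fun j hj => ?_
      have := (Finset.mem_Ico.1 hj).1
      rw [if_neg (by omega), if_neg (by omega)]
    rw [h2, h3, h4]
    omega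
  have hEsum : (E.sum fun _ m => m) = dstar := by
    rw [Finsupp.sum_fintype _ _ (fun _ => rfl)]
    simpa only [hEapp] using hsum
  have hcoeffP : MvPolynomial.coeff E P = 0 := by
    by_contra h
    have h1 := MvPolynomial.le_totalDegree (MvPolynomial.mem_support_iff.2 h)
    rw [hEsum] at h1
    omega
  set Q : MvPolynomial (Fin k) F := MvPolynomial.monomial E 1 - P with hQ
  have hevalQ : ∀ α : Fin k → F, MvPolynomial.eval α Q =
      (∏ i : Fin k, α i ^ e i) - g α := by
    intro α
    rw [hQ, map_sub, hPeval, MvPolynomial.eval_monomial, one_mul, Finsupp.prod_pow]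
    simp only [hEapp]
  -- key: on every slice fixing the tail coordinates, Q has a nonzero point
  have key : ∀ β : Fin k → F, ∃ α : Fin k → F,
      (∀ j : Fin k, ¬ (j : ℕ) < s + 1 → α j = β j) ∧ MvPolynomial.eval α Q ≠ 0 := by
    intro β
    set f : Fin k → MvPolynomial (Fin k) F :=
      fun i => if (i : ℕ) < s + 1 then MvPolynomial.X i else MvPolynomial.C (β i) with hf
    set R : MvPolynomial (Fin k) F := MvPolynomial.aeval f Q with hRdef
    have hcsub : MvPolynomial.coeff E (MvPolynomial.aeval f P) = 0 := by
      by_contra h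
      obtain ⟨v, hv, hveq⟩ := aux_coeff_subst_ne β P E h
      have h1 : (v.sum fun _ m => m) ≤ P.totalDegree := MvPolynomial.le_totalDegree hv
      have h2 : dstar ≤ v.sum fun _ m => m := by
        rw [← hEsum, ← hveq, Finsupp.sum_fintype _ _ (fun _ => rfl),
          Finsupp.sum_fintype _ _ (fun _ => rfl)]
        refine Finset.sum_le_sum fun i _ => ?_
        rw [Finsupp.filter_apply]
        split_ifs <;> omega
      omega
    have hEfilter : E.filter (fun i : Fin k => (i : ℕ) < s + 1) = E := by
      ext i
      rw [Finsupp.filter_apply]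
      split_ifs with hi
      · rfl
      · rw [hEapp, he0 i hi]
    have hmon : MvPolynomial.aeval f (MvPolynomial.monomial E (1 : F))
        = MvPolynomial.monomial E 1 := by
      rw [hf, aux_subst_monomial, hEfilter]
      have hempty : E.support.filter (fun i : Fin k => ¬ (i : ℕ) < s + 1) = ∅ := by
        rw [Finset.filter_eq_empty_iff]
        intro i hi hni
        exact (Finsupp.mem_support_iff.1 hi) (by rw [hEapp, he0 i hni])
      rw [hempty, Finset.prod_empty, mul_one]
    have hcR : MvPolynomial.coeff E R = 1 := by
      rw [hRdef, hQ, map_sub, hmon, MvPolynomial.coeff_sub, hcsub, sub_zero,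
        MvPolynomial.coeff_monomial, if_pos rfl]
    have hRne : R ≠ 0 := by
      intro h
      rw [h, MvPolynomial.coeff_zero] at hcR
      exact zero_ne_one hcR
    have hRmem : R ∈ MvPolynomial.restrictDegree (Fin k) F (Fintype.card F - 1) := by
      rw [MvPolynomial.mem_restrictDegree]
      intro w hw i
      rw [hcard]
      have hwne := MvPolynomial.mem_support_iff.1 hw
      by_cases hmono : MvPolynomial.coeff w (MvPolynomial.aeval f P) = 0
      · have hne : MvPolynomial.coeff w (MvPolynomial.monomial E (1 : F)) ≠ 0 := by
          intro h0
          apply hwne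
          rw [hRdef, hQ, map_sub, hmon, MvPolynomial.coeff_sub, h0, hmono, sub_zero]
        rw [MvPolynomial.coeff_monomial] at hne
        have hEw : E = w := by
          by_contra h
          rw [if_neg h] at hne
          exact hne rfl
        rw [← hEw, hEapp]
        exact he_le i
      · obtain ⟨v, hv, hveq⟩ := aux_coeff_subst_ne β P w hmono
        have hvi : v i ≤ q - 1 := by
          have hd := hPdeg i
          rw [MvPolynomial.degreeOf_le_iff] at hd
          exact hd v hv
        rw [← hveq, Finsupp.filter_apply]
        split_ifs <;> omega
    have hnall : ¬ ∀ γ : Fin k → F, MvPolynomial.eval γ R = 0 := by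
      intro hall
      exact hRne (MvPolynomial.eq_zero_of_eval_eq_zero (Fin k) F R hall hRmem)
    push_neg at hnall
    obtain ⟨γ, hγ⟩ := hnall
    refine ⟨fun i => if (i : ℕ) < s + 1 then γ i else β i, fun j hj => by simp [hj], ?_⟩
    rw [← aux_eval_subst β γ Q]
    exact hγ
  -- rewrite the statement's filter in terms of Q
  have hfilter_eq : (univ.filter fun α : Fin k → F =>
        g α ≠ ∏ i : Fin k, α i ^
          (if (i : ℕ) < s then q - q / p else if (i : ℕ) = s then q - 1 else 0))
      = univ.filter (fun α : Fin k → F => MvPolynomial.eval α Q ≠ 0) := by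
    ext α
    simp only [Finset.mem_filter, Finset.mem_univ, true_and]
    rw [hevalQ α, sub_ne_zero]
    exact ne_comm
  rw [hfilter_eq]
  set T : Finset (Fin k → F) :=
    univ.filter (fun β : Fin k → F => ∀ i : Fin k, (i : ℕ) < s + 1 → β i = 0) with hT
  have hsurj : Set.SurjOn
      (fun (α : Fin k → F) (i : Fin k) => if (i : ℕ) < s + 1 then (0 : F) else α i)
      ↑(univ.filter fun α : Fin k → F => MvPolynomial.eval α Q ≠ 0) ↑T := by
    intro β hβ
    simp only [hT, Finset.coe_filter, Set.mem_setOf_eq, Finset.mem_univ, true_and] at hβ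
    obtain ⟨α, hα1, hα2⟩ := key β
    refine ⟨α, ?_, ?_⟩
    · simp only [Finset.coe_filter, Set.mem_setOf_eq, Finset.mem_univ, true_and]
      exact hα2
    · funext i
      by_cases hi : (i : ℕ) < s + 1
      · simpa [hi] using (hβ i hi).symm
      · simpa [hi] using hα1 i hi
  have hle := Finset.card_le_card_of_surjOn _ hsurj
  have hTcard : T.card = q ^ (k - s - 1) := by
    have hTeq : T = Fintype.piFinset (fun i : Fin k =>
        if (i : ℕ) < s + 1 then ({0} : Finset F) else univ) := by
      ext β
      simp only [hT, Finset.mem_filter, Finset.mem_univ, true_and, Fintype.mem_piFinset]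
      constructor
      · intro h i
        by_cases hi : (i : ℕ) < s + 1
        · rw [if_pos hi]
          simp [h i hi]
        · rw [if_neg hi]
          exact Finset.mem_univ _
      · intro h i hi
        have hh := h i
        rw [if_pos hi] at hh
        simpa using hh
    have hcardite : ∀ i : Fin k,
        ((if (i : ℕ) < s + 1 then ({0} : Finset F) else univ)).card
          = if (i : ℕ) < s + 1 then 1 else q := by
      intro i
      split_ifs
      · exact Finset.card_singleton _
      · rw [Finset.card_univ, hcard]
    have hc1 : (univ.filter fun i : Fin k => (i : ℕ) < s + 1).card = s + 1 := by
      have himg : (univ.filter fun i : Fin k => (i : ℕ) < s + 1)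
          = Finset.univ.map (Fin.castLEEmb hk) := by
        ext i
        simp only [Finset.mem_filter, Finset.mem_univ, true_and, Finset.mem_map]
        constructor
        · intro hi
          exact ⟨⟨(i : ℕ), hi⟩, rfl⟩
        · rintro ⟨j, rfl⟩
          simp
          have := j.isLt
          omega
      rw [himg, Finset.card_map, Finset.card_univ, Fintype.card_fin]
    have hc2 : (univ.filter fun i : Fin k => ¬ (i : ℕ) < s + 1).card = k - s - 1 := by
      have hpa := Finset.card_filter_add_card_filter_not
        (s := (univ : Finset (Fin k))) (p := fun i : Fin k => (i : ℕ) < s + 1)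
      rw [Finset.card_univ, Fintype.card_fin, hc1] at hpa
      omega
    rw [hTeq, Fintype.card_piFinset]
    rw [Finset.prod_congr rfl (fun i _ => hcardite i), Finset.prod_ite, Finset.prod_const_one,
      Finset.prod_const, one_mul, hc2]
  rw [← hTcard]
  exact hle
end
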